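/- arXiv:2512.13585 — 6 statements merged into one kernel-verified Lean document; each statement's English description precedes it below -/
import Mathlib

section
/- Let T be a transmission irregular tree and let v be a vertex of T having the minimum transmission among all vertices of T. Then the degree of v in T is at least 3. -/
open SimpleGraph

variable {V : Type*}

/-- The transmission of a vertex `v`: the sum of distances from `v` to all vertices. -/
noncomputable def transmission (G : SimpleGraph V) [Fintype V] (v : V) : ℕ :=
  ∑ u : V, G.dist v u

/-- The Wiener index: the sum of distances over all unordered pairs of vertices. -/
noncomputable def wienerIndex (G : SimpleGraph V) [Fintype V] : ℕ :=
  (∑ u : V, ∑ w : V, G.dist u w) / 2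

/-- A graph on at least two vertices is transmission irregular if all of its vertices
have pairwise distinct transmissions. -/
def TransIrregular (G : SimpleGraph V) [Fintype V] : Prop :=
  2 ≤ Fintype.card V ∧ Function.Injective (transmission G)

/-- The degree of a vertex. -/
noncomputable def vertexDegree (G : SimpleGraph V) (v : V) : ℕ :=
  Nat.card (G.neighborSet v)

/-- A natural number is a perfect square. -/
def IsPerfectSquare (m : ℕ) : Prop := ∃ t : ℕ, m = t * t

/-- The starlike tree `S(a, b, c)`: three pendent paths of lengths `a`, `b`, `c`
emanating from a common central vertex (vertex `0`).  The first branch consists of the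
vertices `1, …, a`, the second of `a+1, …, a+b` and the third of `a+b+1, …, a+b+c`. -/
def starlike (a b c : ℕ) : SimpleGraph (Fin (a + b + c + 1)) :=
  SimpleGraph.fromRel (fun x y =>
    (y.val = x.val + 1 ∧ x.val ≠ a ∧ x.val ≠ a + b) ∨
    (x.val = 0 ∧ (y.val = a + 1 ∨ y.val = a + b + 1)))

/-- The ordinary caterpillar `C_m(a, b)`: the path `v_1 v_2 ⋯ v_m` (vertices `0, …, m-1`)
together with one new leaf attached to `v_a` (the vertex `m`, attached to `a-1`) and one new
leaf attached to `v_b` (the vertex `m+1`, attached to `b-1`). -/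
def caterpillar2 (m a b : ℕ) : SimpleGraph (Fin (m + 2)) :=
  SimpleGraph.fromRel (fun x y =>
    (y.val = x.val + 1 ∧ y.val < m) ∨
    (x.val = a - 1 ∧ y.val = m) ∨
    (x.val = b - 1 ∧ y.val = m + 1))

/-- The variant caterpillar `C_m(a, 2; b, 1)`: the path `v_1 v_2 ⋯ v_m`
(vertices `0, …, m-1`) together with a pendent path of length two attached to `v_a`
(vertices `m` and `m+1`) and a pendent path of length one attached to `v_b`
(the vertex `m+2`). -/
def varCaterpillar (m a b : ℕ) : SimpleGraph (Fin (m + 3)) :=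
  SimpleGraph.fromRel (fun x y =>
    (y.val = x.val + 1 ∧ y.val < m) ∨
    (x.val = a - 1 ∧ y.val = m) ∨
    (x.val = m ∧ y.val = m + 1) ∨
    (x.val = b - 1 ∧ y.val = m + 2))

/-- `T` is a transmission irregular tree of order `n` attaining the maximum Wiener
index among all transmission irregular trees of order `n`. -/
def MaxTITree (n : ℕ) (T : SimpleGraph (Fin n)) : Prop :=
  T.IsTree ∧ TransIrregular T ∧
    ∀ T' : SimpleGraph (Fin n), T'.IsTree → TransIrregular T' →
      wienerIndex T' ≤ wienerIndex T

/-- The graph `X` is, up to isomorphism, the unique transmission irregular tree of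
order `n` attaining the maximum Wiener index. -/
def UniqueMaxTITree (n : ℕ) {m : ℕ} (X : SimpleGraph (Fin m)) : Prop :=
  (∃ T : SimpleGraph (Fin n), MaxTITree n T ∧ Nonempty (T ≃g X)) ∧
    ∀ T : SimpleGraph (Fin n), MaxTITree n T → Nonempty (T ≃g X)

/-!
Along an edge `vu` of a tree the transmission changes by `Tr u = Tr v + n - 2 n_u`, where `n_u` is
the size of the branch at `v` containing `u`. These branches partition the `n - 1` vertices other
than `v`, so summing over the neighbours of `v` gives
`∑ Tr u + 2 (n - 1) = deg v · (Tr v + n)`. If `v` has minimum transmission in a transmission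
irregular tree, then `Tr u ≥ Tr v + 1` for every neighbour `u`; this excludes `deg v ≤ 1`, and for
`deg v = 2` it forces both neighbours to have transmission `Tr v + 1`.
-/

namespace SimpleGraph

variable {G : SimpleGraph V}

/-- The set `N_u(uv)` of Wiener-index theory; for an edge `uv` of a tree it is the branch at `v`
containing `u`. -/
noncomputable def closerVerts (G : SimpleGraph V) [Fintype V] (u v : V) : Finset V :=
  {x | G.dist u x < G.dist v x}

lemma Adj.dist_lt_dist_iff {u v x : V} (h : G.Adj v u) :
    G.dist u x < G.dist v x ↔ G.dist u x + 1 = G.dist v x := by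
  have := h.diff_dist_adj (u := x)
  rw [dist_comm (u := x), dist_comm (u := x)] at this
  omega

lemma Reachable.exists_adj_dist_add_one_eq {v x : V} (hr : G.Reachable v x) (hne : v ≠ x) :
    ∃ u, G.Adj v u ∧ G.dist u x + 1 = G.dist v x := by
  obtain ⟨p, hp⟩ := hr.exists_walk_length_eq_dist
  cases p with
  | nil => exact absurd rfl hne
  | cons h q =>
    rw [Walk.length_cons] at hp
    obtain ⟨r, hr⟩ := q.reachable.exists_walk_length_eq_dist
    have hq := dist_le q
    have hr' := dist_le (Walk.cons h r)
    rw [Walk.length_cons] at hr'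
    exact ⟨_, h, by omega⟩

lemma IsTree.eq_of_adj_of_dist_add_one_eq (hG : G.IsTree) {v u w x : V}
    (hu : G.Adj v u) (hw : G.Adj v w)
    (hux : G.dist u x + 1 = G.dist v x) (hwx : G.dist w x + 1 = G.dist v x) : u = w := by
  obtain ⟨p, hp⟩ := (hG.connected u x).exists_walk_length_eq_dist
  obtain ⟨q, hq⟩ := (hG.connected w x).exists_walk_length_eq_dist
  have hup : (Walk.cons hu p).IsPath := Walk.isPath_of_length_eq_dist _ (by simp [hp, hux])
  have hwq : (Walk.cons hw q).IsPath := Walk.isPath_of_length_eq_dist _ (by simp [hq, hwx])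
  have := (hG.existsUnique_path v x).unique hup hwq
  simpa using congrArg Walk.snd this

variable [Fintype V]

lemma IsTree.transmission_add_two_mul_card_closerVerts (hG : G.IsTree) {u v : V}
    (h : G.Adj v u) :
    transmission G u + 2 * (G.closerVerts u v).card = transmission G v + Fintype.card V := by
  rw [closerVerts, Finset.card_filter, Finset.mul_sum, Fintype.card_eq_sum_ones, transmission,
    transmission, ← Finset.sum_add_distrib, ← Finset.sum_add_distrib]
  refine Finset.sum_congr rfl fun x _ => ?_
  have := hG.dist_eq_dist_add_one_of_adj x h
  rw [dist_comm (u := x), dist_comm (u := x)] at this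
  split_ifs <;> omega

lemma IsTree.sum_card_closerVerts [DecidableRel G.Adj] (hG : G.IsTree) (v : V) :
    ∑ u ∈ G.neighborFinset v, (G.closerVerts u v).card = Fintype.card V - 1 := by
  classical
  have hmem : ∀ {u x}, G.Adj v u → (x ∈ G.closerVerts u v ↔ G.dist u x + 1 = G.dist v x) :=
    fun h => by rw [closerVerts, Finset.mem_filter_univ, h.dist_lt_dist_iff]
  have hdisj : (G.neighborFinset v : Set V).PairwiseDisjoint (G.closerVerts · v) := by
    intro u hu w hw huw
    rw [coe_neighborFinset, mem_neighborSet] at hu hw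
    refine Finset.disjoint_left.mpr fun x hxu hxw => huw ?_
    exact hG.eq_of_adj_of_dist_add_one_eq hu hw ((hmem hu).mp hxu) ((hmem hw).mp hxw)
  have hcover : (G.neighborFinset v).biUnion (G.closerVerts · v) = Finset.univ.erase v := by
    ext x
    simp only [Finset.mem_biUnion, mem_neighborFinset, Finset.mem_erase, Finset.mem_univ,
      and_true]
    constructor
    · rintro ⟨u, hu, hx⟩ rfl
      have := (hmem hu).mp hx
      rw [dist_self] at this
      omega
    · intro hx
      obtain ⟨u, hu, hux⟩ := (hG.connected v x).exists_adj_dist_add_one_eq (Ne.symm hx)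
      exact ⟨u, hu, (hmem hu).mpr hux⟩
  rw [← Finset.card_biUnion hdisj, hcover, Finset.card_erase_of_mem (Finset.mem_univ v),
    Finset.card_univ]

lemma IsTree.sum_transmission_neighborFinset [DecidableRel G.Adj] (hG : G.IsTree) (v : V) :
    ∑ u ∈ G.neighborFinset v, transmission G u + 2 * (Fintype.card V - 1) =
      G.degree v * (transmission G v + Fintype.card V) := by
  rw [← hG.sum_card_closerVerts v, Finset.mul_sum, ← Finset.sum_add_distrib,
    Finset.sum_congr rfl fun u hu =>
      hG.transmission_add_two_mul_card_closerVerts ((mem_neighborFinset G v u).mp hu),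
    Finset.sum_const, smul_eq_mul, card_neighborFinset_eq_degree]

end SimpleGraph

/-- In a transmission irregular tree, any vertex of minimum transmission
has degree at least 3. -/
theorem min_transmission_vertex_degree_ge_three [Fintype V] (T : SimpleGraph V)
    (hT : T.IsTree) (hTI : TransIrregular T) (v : V)
    (hmin : ∀ u : V, transmission T v ≤ transmission T u) :
    3 ≤ vertexDegree T v := by
  classical
  obtain ⟨hn, hinj⟩ := hTI
  have hlt : ∀ {u}, T.Adj v u → transmission T v < transmission T u :=
    fun h => (hmin _).lt_of_ne (hinj.ne h.ne)
  have hsum := hT.sum_transmission_neighborFinset v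
  rw [← card_neighborFinset_eq_degree] at hsum
  rw [vertexDegree, Nat.card_eq_fintype_card, card_neighborSet_eq_degree,
    ← card_neighborFinset_eq_degree]
  by_contra! hdeg
  obtain h | h | h : (T.neighborFinset v).card = 0 ∨ (T.neighborFinset v).card = 1 ∨
      (T.neighborFinset v).card = 2 := by omega
  · rw [h, Finset.card_eq_zero.mp h, Finset.sum_empty] at hsum
    omega
  · obtain ⟨u, hN⟩ := Finset.card_eq_one.mp h
    have hu := hlt ((mem_neighborFinset T v u).mp (by simp [hN]))
    rw [h, hN, Finset.sum_singleton] at hsum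
    omega
  · obtain ⟨u, w, huw, hN⟩ := Finset.card_eq_two.mp h
    have hu := hlt ((mem_neighborFinset T v u).mp (by simp [hN]))
    have hw := hlt ((mem_neighborFinset T v w).mp (by simp [hN]))
    rw [h, hN, Finset.sum_pair huw] at hsum
    exact huw (hinj (by omega))
end

section
/- Let T be a transmission irregular tree and let v be any vertex of T. If the components of T − v are T_1, …, T_t with |T_k| = a_k for k ∈ {1, …, t}, then a_i ≠ a_j for any two distinct indices i, j ∈ {1, …, t}; that is, the components of T − v have pairwise distinct orders. -/
open SimpleGraph

variable {V : Type*}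

/-! Crossing an edge `vu` of a tree brings the vertices of the branch at `v` through `u` one
step closer and all other vertices one step farther, so `Tr u + 2 n_u = Tr v + n`, where `n_u` is
the order of that branch. The components of `T - v` are exactly these branches, one for each
neighbour `u` of `v`; two of equal order would give two neighbours of equal transmission. -/

namespace SimpleGraph

variable {G : SimpleGraph V} {u v w x : V}

theorem reachable_induce_iff {s : Set V} {a b : s} :
    (G.induce s).Reachable a b ↔ ∃ p : G.Walk a b, ∀ y ∈ p.support, y ∈ s := by
  constructor
  · rintro ⟨q⟩
    refine ⟨q.map (Embedding.induce s).toHom, fun y hy => ?_⟩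
    obtain ⟨z, -, rfl⟩ := List.mem_map.1 ((Walk.support_map _ q) ▸ hy)
    exact z.2
  · rintro ⟨p, hp⟩
    exact ⟨p.induce s hp⟩

theorem reachable_induce_compl_singleton_iff {a b : ({v}ᶜ : Set V)} :
    (G.induce {v}ᶜ).Reachable a b ↔ ∃ p : G.Walk a b, v ∉ p.support := by
  simp only [reachable_induce_iff, Set.mem_compl_singleton_iff]
  exact exists_congr fun p => ⟨fun h hv => h v hv rfl, fun h y hy hyv => h (hyv ▸ hy)⟩

def branch (G : SimpleGraph V) (v u : V) : Set V :=
  {x | ∃ p : G.Walk u x, v ∉ p.support}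

theorem branch_eq_image_supp (hu : u ≠ v) :
    G.branch v u = Subtype.val '' ((G.induce {v}ᶜ).connectedComponentMk ⟨u, hu⟩).supp := by
  ext x
  constructor
  · rintro ⟨p, hp⟩
    have hx : x ≠ v := fun h => hp (h ▸ p.end_mem_support)
    exact ⟨⟨x, hx⟩,
      ConnectedComponent.sound (reachable_induce_compl_singleton_iff.2 ⟨p, hp⟩).symm, rfl⟩
  · rintro ⟨⟨x, hx⟩, hxu, rfl⟩
    exact reachable_induce_compl_singleton_iff.1 (ConnectedComponent.exact hxu).symm

theorem ncard_branch (hu : u ≠ v) :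
    (G.branch v u).ncard = Nat.card ((G.induce {v}ᶜ).connectedComponentMk ⟨u, hu⟩).supp := by
  rw [branch_eq_image_supp hu, Set.ncard_image_of_injective _ Subtype.val_injective,
    Nat.card_coe_set_eq]

theorem Reachable.exists_adj_mem_branch (h : G.Reachable v x) (hx : x ≠ v) :
    ∃ u, G.Adj v u ∧ x ∈ G.branch v u := by
  obtain ⟨p, hp, -⟩ := h.exists_path_of_dist
  cases p with
  | nil => exact absurd rfl hx
  | cons hu q => exact ⟨_, hu, q, ((Walk.cons_isPath_iff _ _).1 hp).2⟩

theorem Preconnected.exists_adj_connectedComponentMk_eq (hG : G.Preconnected) (v : V)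
    (c : (G.induce {v}ᶜ).ConnectedComponent) :
    ∃ u, ∃ hu : G.Adj v u, (G.induce {v}ᶜ).connectedComponentMk ⟨u, hu.ne'⟩ = c := by
  induction c using ConnectedComponent.ind with
  | h x =>
    obtain ⟨u, hu, p, hp⟩ := (hG v x).exists_adj_mem_branch x.2
    exact ⟨u, hu, ConnectedComponent.sound (reachable_induce_compl_singleton_iff.2 ⟨p, hp⟩)⟩

theorem IsAcyclic.eq_of_adj_of_mem_branch (hG : G.IsAcyclic) (hu : G.Adj v u) (hw : G.Adj v w)
    (hwu : w ∈ G.branch v u) : w = u := by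
  classical
  obtain ⟨p, hp⟩ := hwu
  have hpath : (Walk.cons hu p.bypass).IsPath :=
    p.bypass_isPath.cons fun h => hp (p.support_bypass_subset_support h)
  simpa using hG.eq_snd_of_adj_start hpath hw (by simp)

theorem IsAcyclic.dist_eq_dist_add_one_of_mem_branch (hG : G.IsAcyclic) (hu : G.Adj v u)
    (hx : x ∈ G.branch v u) : G.dist v x = G.dist u x + 1 := by
  obtain ⟨p, hp⟩ := hx
  have hxv : x ≠ v := fun h => hp (h ▸ p.end_mem_support)
  obtain ⟨r, hr, hlen⟩ := (hu.reachable.trans ⟨p⟩).exists_path_of_dist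
  cases r with
  | nil => exact absurd rfl hxv.symm
  | cons hw q =>
    have hvq : v ∉ q.support := ((Walk.cons_isPath_iff _ _).1 hr).2
    obtain rfl := hG.eq_of_adj_of_mem_branch hu hw
      ⟨p.append q.reverse, by simp [Walk.mem_support_append_iff, hp, hvq]⟩
    have := dist_le q
    have := hu.reachable.dist_triangle_left x
    rw [dist_eq_one_iff_adj.2 hu] at this
    simp only [Walk.length_cons] at hlen
    omega

theorem Reachable.dist_eq_dist_add_one_of_notMem_branch (h : G.Reachable u x)
    (hu : G.Adj v u) (hx : x ∉ G.branch v u) : G.dist u x = G.dist v x + 1 := by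
  classical
  obtain ⟨p, -, hlen⟩ := h.exists_path_of_dist
  have hv : v ∈ p.support := by_contra fun hv => hx ⟨p, hv⟩
  have hsplit := congrArg Walk.length (p.take_spec hv)
  rw [Walk.length_append] at hsplit
  have hto : G.dist u v ≤ (p.takeUntil v hv).length := dist_le _
  have hfrom : G.dist v x ≤ (p.dropUntil v hv).length := dist_le _
  have htri := hu.symm.reachable.dist_triangle_left x
  rw [dist_eq_one_iff_adj.2 hu.symm] at hto htri
  omega

theorem IsTree.transmission_add_two_mul_ncard_branch [Fintype V] (hG : G.IsTree)
    (hu : G.Adj v u) :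
    transmission G u + 2 * (G.branch v u).ncard = transmission G v + Fintype.card V := by
  classical
  have key : ∀ x, G.dist u x + 2 * (if x ∈ G.branch v u then 1 else 0) = G.dist v x + 1 := by
    intro x
    split_ifs with hx
    · have := hG.isAcyclic.dist_eq_dist_add_one_of_mem_branch hu hx
      omega
    · have := (hG.connected.preconnected u x).dist_eq_dist_add_one_of_notMem_branch hu hx
      omega
  have := Finset.sum_congr rfl fun x (_ : x ∈ Finset.univ) => key x
  simp only [Finset.sum_add_distrib, ← Finset.mul_sum, Finset.sum_boole] at this
  simpa [transmission, Set.ncard_eq_toFinset_card'] using this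

end SimpleGraph

/-- In a transmission irregular tree `T`, for any vertex `v`, the
components of `T - v` have pairwise distinct orders. -/
theorem components_of_vertex_deleted_TI_tree_distinct_orders [Fintype V]
    (T : SimpleGraph V) (hT : T.IsTree) (hTI : TransIrregular T) (v : V)
    (c d : (T.induce ({v}ᶜ : Set V)).ConnectedComponent) (hcd : c ≠ d) :
    Nat.card c.supp ≠ Nat.card d.supp := by
  obtain ⟨u, hu, rfl⟩ := hT.connected.preconnected.exists_adj_connectedComponentMk_eq v c
  obtain ⟨w, hw, rfl⟩ := hT.connected.preconnected.exists_adj_connectedComponentMk_eq v d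
  rw [← ncard_branch, ← ncard_branch]
  intro hcard
  have hu' := hT.transmission_add_two_mul_ncard_branch hu
  have hw' := hT.transmission_add_two_mul_ncard_branch hw
  obtain rfl : u = w := hTI.2 (by omega)
  exact hcd rfl
end

section
/- Let T_1 be a tree of order ℓ + 1 > 1 that is not a path, with a vertex v_1 ∈ V(T_1), and let T_2 be a tree on at least 2 vertices with a vertex v_2 ∈ V(T_2). Let T be the tree obtained from disjoint copies of T_1 and T_2 by identifying v_1 with v_2, and let T' be the tree obtained from a disjoint copy of T_2 and a path P_{ℓ+1} on ℓ + 1 vertices by identifying v_2 with an endpoint of P_{ℓ+1}. Then W(T) < W(T'). -/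
open SimpleGraph

variable {V : Type*}

/-- The graph obtained from disjoint copies of `G` and `H` by identifying the vertex
`v` of `G` with the vertex `w` of `H` (the merged vertex is represented by `w`). -/
def glue {W : Type*} (G : SimpleGraph V) (v : V) (H : SimpleGraph W) (w : W) :
    SimpleGraph ({x : V // x ≠ v} ⊕ W) :=
  SimpleGraph.fromRel (fun a b =>
    match a, b with
    | Sum.inl x, Sum.inl y => G.Adj x.val y.val
    | Sum.inl x, Sum.inr z => z = w ∧ G.Adj x.val v
    | Sum.inr _, Sum.inl _ => False
    | Sum.inr z, Sum.inr z' => H.Adj z z')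

/-!
Write `S(G) = 2 W(G)` for the sum of distances over ordered pairs and `t_G(v)` for the
transmission of `v`. The glued graph embeds isometrically into the box product `G □ H`, which
gives `S(G ∘ H) = S(G) + S(H) + 2 (|H| - 1) t_G(v₁) + 2 (|G| - 1) t_H(v₂)`. Hence it suffices that
`S(T₁) ≤ S(P_{ℓ+1})` and `t_{T₁}(v₁) < t_P(0) = C(ℓ + 1, 2)`.
The distances from a vertex take every value of an initial segment of `ℕ`, so a transmission is at
most `C(n, 2)`, with equality only if these distances are pairwise distinct, which makes the graph a
path. Deleting a vertex that leaves the graph connected then gives `S(G) ≤ 2 C(n + 1, 3) ≤ S(P_n)`.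
-/

open Finset

theorem Nat.add_choose_two (a b : ℕ) : (a + b).choose 2 = a.choose 2 + a * b + b.choose 2 := by
  induction b with
  | zero => simp
  | succ b ih =>
    rw [← add_assoc, Nat.choose_succ_succ, ih, Nat.choose_succ_succ b, Nat.choose_one_right,
      Nat.choose_one_right]
    ring

-- For `c k` vertices at distance `k` from `v`, this reads `t(v) ≤ C(n, 2) - (n - m)`.
theorem sum_range_mul_add_sum_le (c : ℕ → ℕ) (m : ℕ) (hc : ∀ k < m, 1 ≤ c k) :
    ∑ k ∈ range m, k * c k + ∑ k ∈ range m, c k ≤ (∑ k ∈ range m, c k).choose 2 + m := by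
  induction m with
  | zero => simp
  | succ m ih =>
    have ih := ih fun k hk => hc k (by omega)
    have hm : m ≤ ∑ k ∈ range m, c k := by
      simpa using Finset.card_nsmul_le_sum (range m) c 1 fun k hk => hc k (by simp at hk; omega)
    obtain ⟨d, hd⟩ : ∃ d, c m = d + 1 := ⟨c m - 1, by have := hc m (by omega); omega⟩
    have hd2 : d ≤ (d + 1).choose 2 := by simp [Nat.choose_succ_succ]
    simp only [sum_range_succ, Nat.add_choose_two, hd]
    nlinarith

theorem sum_range_id_eq_choose_two (n : ℕ) : ∑ i ∈ range n, i = n.choose 2 := by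
  rw [sum_range_id, Nat.choose_two_right]

theorem sum_range_tsub_eq_choose_two (n : ℕ) : ∑ i ∈ range n, (n - i) = (n + 1).choose 2 := by
  have := sum_range_reflect (fun i => i) (n + 1)
  simp only [add_tsub_cancel_right, sum_range_succ, tsub_self, add_zero] at this
  rw [this, ← sum_range_succ, sum_range_id_eq_choose_two]

theorem sum_range_sum_range_tsub (n : ℕ) :
    ∑ i ∈ range n, ∑ j ∈ range n, (j - i) = (n + 1).choose 3 := by
  induction n with
  | zero => rfl
  | succ n ih =>
    have hzero : ∑ j ∈ range n, (j - n) = 0 :=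
      sum_eq_zero fun j hj => Nat.sub_eq_zero_of_le (mem_range.1 hj).le
    simp only [sum_range_succ, sum_add_distrib, ih, hzero, tsub_self, add_zero,
      sum_range_tsub_eq_choose_two]
    rw [Nat.choose_succ_succ' (n + 1) 2, add_comm]

namespace SimpleGraph

variable {V W : Type*} {G : SimpleGraph V} {H : SimpleGraph W}

theorem Hom.dist_le (f : G →g H) {u v : V} (h : G.Reachable u v) :
    H.dist (f u) (f v) ≤ G.dist u v := by
  obtain ⟨p, hp⟩ := h.exists_walk_length_eq_dist
  simpa [hp] using H.dist_le (p.map f)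

theorem dist_boxProd {x y : V × W} (h₁ : G.Reachable x.1 y.1) (h₂ : H.Reachable x.2 y.2) :
    (G □ H).dist x y = G.dist x.1 y.1 + H.dist x.2 y.2 := by
  have h := edist_boxProd (G := G) (H := H) x y
  rw [← (reachable_boxProd.2 ⟨h₁, h₂⟩).coe_dist_eq_edist, ← h₁.coe_dist_eq_edist,
    ← h₂.coe_dist_eq_edist] at h
  exact_mod_cast h

theorem Walk.le_add_length {f : V → ℕ} (hf : ∀ a b, G.Adj a b → f b ≤ f a + 1) {u w : V}
    (p : G.Walk u w) : f w ≤ f u + p.length := by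
  induction p with
  | nil => simp
  | cons h _ ih => have := hf _ _ h; rw [Walk.length_cons]; omega

theorem Reachable.le_add_dist {f : V → ℕ} (hf : ∀ a b, G.Adj a b → f b ≤ f a + 1) {u w : V}
    (h : G.Reachable u w) : f w ≤ f u + G.dist u w := by
  obtain ⟨p, hp⟩ := h.exists_walk_length_eq_dist
  exact hp ▸ p.le_add_length hf

theorem exists_adj_dist_eq_of_dist_eq_succ {u v : V} {k : ℕ} (h : G.dist u v = k + 1) :
    ∃ w, G.Adj u w ∧ G.dist w v = k := by
  have hr : G.Reachable u v := Reachable.of_dist_ne_zero (by omega)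
  obtain ⟨p, hp⟩ := hr.exists_walk_length_eq_dist
  rw [h] at hp
  cases p with
  | nil => simp at hp
  | @cons _ w _ hadj q =>
    rw [Walk.length_cons] at hp
    have hle := G.dist_le q
    have htri := q.reachable.dist_triangle_right u
    rw [dist_eq_one_iff_adj.2 hadj] at htri
    exact ⟨w, hadj, by omega⟩

theorem exists_dist_eq_of_le {v u : V} {j : ℕ} (h : j ≤ G.dist v u) : ∃ w, G.dist v w = j := by
  induction hd : G.dist v u generalizing u with
  | zero => exact ⟨v, by simp; omega⟩
  | succ d ih =>
    rcases (show j = d + 1 ∨ j ≤ d by omega) with rfl | hj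
    · exact ⟨u, hd⟩
    · rw [dist_comm] at hd
      obtain ⟨w, -, hw⟩ := exists_adj_dist_eq_of_dist_eq_succ hd
      exact ih (u := w) (by rw [dist_comm, hw]; exact hj) (by rw [dist_comm, hw])

end SimpleGraph

section Transmission

variable {G : SimpleGraph V} [Fintype V]

theorem image_dist_eq_range (v : V) :
    univ.image (G.dist v) = range #(univ.image (G.dist v)) := by
  have hlt : ∀ u, G.dist v u < #(univ.image (G.dist v)) := fun u => by
    have : range (G.dist v u + 1) ⊆ univ.image (G.dist v) := fun j hj => by
      obtain ⟨w, hw⟩ := exists_dist_eq_of_le (G := G) (Nat.lt_succ_iff.1 (mem_range.1 hj))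
      exact mem_image.2 ⟨w, mem_univ _, hw⟩
    simpa using card_le_card this
  refine eq_of_subset_of_card_le (fun k hk => ?_) (by simp)
  obtain ⟨u, -, rfl⟩ := mem_image.1 hk
  exact mem_range.2 (hlt u)

theorem transmission_add_card_le (v : V) :
    transmission G v + Fintype.card V ≤ (Fintype.card V).choose 2 + #(univ.image (G.dist v)) := by
  set m := #(univ.image (G.dist v))
  have hrange : univ.image (G.dist v) = range m := image_dist_eq_range v
  have htr : transmission G v = ∑ k ∈ range m, k * #{u | G.dist v u = k} := by
    rw [transmission, ← hrange]
    simpa [mul_comm] using Finset.sum_comp (s := univ) (fun k : ℕ => k) (G.dist v)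
  have hcard : Fintype.card V = ∑ k ∈ range m, #{u | G.dist v u = k} := by
    rw [← hrange, ← card_univ]
    exact card_eq_sum_card_image _ _
  have hc : ∀ k < m, 1 ≤ #{u | G.dist v u = k} := fun k hk => by
    rw [← mem_range, ← hrange, mem_image] at hk
    obtain ⟨u, -, hu⟩ := hk
    exact card_pos.2 ⟨u, by simp [hu]⟩
  rw [htr, hcard]
  exact sum_range_mul_add_sum_le _ m hc

theorem transmission_le_choose_two (v : V) : transmission G v ≤ (Fintype.card V).choose 2 := by
  have := transmission_add_card_le (G := G) v
  have : #(univ.image (G.dist v)) ≤ Fintype.card V := card_image_le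
  omega

theorem nonempty_iso_pathGraph_of_injective_dist {v : V}
    (hinj : Function.Injective (G.dist v)) : Nonempty (G ≃g pathGraph (Fintype.card V)) := by
  have hlt : ∀ u, G.dist v u < Fintype.card V := fun u => by
    have h := image_dist_eq_range (G := G) v
    rw [card_image_of_injective _ hinj, card_univ] at h
    exact mem_range.1 (h ▸ mem_image_of_mem _ (mem_univ u))
  have hadj : ∀ a b, G.dist v a + 1 = G.dist v b → G.Adj a b := fun a b h => by
    obtain ⟨w, hbw, hw⟩ := exists_adj_dist_eq_of_dist_eq_succ (G := G) (u := b) (v := v)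
      (by rw [dist_comm, h])
    obtain rfl : w = a := hinj (by rw [dist_comm, hw])
    exact hbw.symm
  let e : V ≃ Fin (Fintype.card V) := Equiv.ofBijective (fun u => ⟨G.dist v u, hlt u⟩)
    ((Fintype.bijective_iff_injective_and_card _).2
      ⟨fun a b h => hinj (Fin.mk.inj_iff.1 h), by simp⟩)
  refine ⟨⟨e, fun {a b} => ?_⟩⟩
  simp only [e, Equiv.ofBijective_apply, pathGraph_adj]
  refine ⟨fun h => h.elim (hadj a b) fun h => (hadj b a h).symm, fun h => ?_⟩
  have := h.diff_dist_adj (u := v)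
  have := hinj.ne h.ne
  omega

theorem transmission_lt_choose_two (v : V)
    (h : ¬ Nonempty (G ≃g pathGraph (Fintype.card V))) :
    transmission G v < (Fintype.card V).choose 2 := by
  have hinj : ¬ Function.Injective (G.dist v) :=
    fun hinj => h (nonempty_iso_pathGraph_of_injective_dist hinj)
  have himage : #(univ.image (G.dist v)) < Fintype.card V := by
    refine lt_of_le_of_ne card_image_le fun heq => hinj fun a b hab => ?_
    exact card_image_iff.1 heq (mem_coe.2 (mem_univ a)) (mem_coe.2 (mem_univ b)) hab
  have := transmission_add_card_le (G := G) v
  omega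

end Transmission

noncomputable def sumDist (G : SimpleGraph V) [Fintype V] : ℕ :=
  ∑ u, ∑ w, G.dist u w

section SumDist

variable {G : SimpleGraph V} [Fintype V]

theorem sum_dist_eq_transmission (v : V) : ∑ u, G.dist u v = transmission G v :=
  sum_congr rfl fun _ _ => dist_comm

theorem sumDist_le_sumDist_induce_add [DecidableEq V] {v : V}
    (hG : (G.induce {v}ᶜ).Connected) :
    sumDist G ≤ sumDist (G.induce {v}ᶜ) + 2 * transmission G v := by
  have hsplit (f : V → ℕ) : ∑ u, f u = f v + ∑ u : ({v}ᶜ : Set V), f u := by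
    rw [Fintype.sum_eq_add_sum_subtype_ne f v]
    congr 1
  have hv : ∑ x : ({v}ᶜ : Set V), G.dist x v = transmission G v := by
    rw [← sum_dist_eq_transmission, hsplit (G.dist · v), dist_self, zero_add]
  calc sumDist G = transmission G v + ∑ x : ({v}ᶜ : Set V), ∑ w, G.dist x w := hsplit _
    _ = ∑ x : ({v}ᶜ : Set V), ∑ y : ({v}ᶜ : Set V), G.dist x y + 2 * transmission G v := by
        simp only [hsplit (G.dist _), sum_add_distrib, hv]
        ring
    _ ≤ sumDist (G.induce {v}ᶜ) + 2 * transmission G v := by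
        unfold sumDist
        gcongr with x _ y _
        exact (Embedding.induce _).toHom.dist_le (hG x y)

theorem sumDist_le_two_mul_choose_three (hG : G.Connected) :
    sumDist G ≤ 2 * (Fintype.card V + 1).choose 3 := by
  induction h : Fintype.card V generalizing V with
  | zero => exact ((Fintype.card_eq_zero_iff.1 h).false hG.nonempty.some).elim
  | succ n ih =>
    classical
    rcases Nat.eq_zero_or_pos n with rfl | hn
    · have : Subsingleton V := Fintype.card_le_one_iff_subsingleton.1 h.le
      simp [sumDist]
    have : Nontrivial V := Fintype.one_lt_card_iff_nontrivial.1 (by omega)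
    obtain ⟨v, hv⟩ := hG.exists_connected_induce_compl_singleton_of_finite_nontrivial
    have hcard : Fintype.card ({v}ᶜ : Set V) = n := by
      simp [filter_ne', card_erase_of_mem, h]
    have h₁ := ih hv hcard
    have h₂ := sumDist_le_sumDist_induce_add hv
    have h₃ := transmission_le_choose_two (G := G) v
    rw [h] at h₃
    have h₄ : (n + 1 + 1).choose 3 = (n + 1).choose 2 + (n + 1).choose 3 :=
      Nat.choose_succ_succ' (n + 1) 2
    omega

end SumDist

theorem pathGraph_le_add_dist {n : ℕ} (i j : Fin n) : (j : ℕ) ≤ i + (pathGraph n).dist i j :=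
  (pathGraph_preconnected n i j).le_add_dist fun a b h => by
    rcases pathGraph_adj.1 h with h | h <;> omega

theorem choose_two_le_transmission_pathGraph (n : ℕ) :
    (n + 1).choose 2 ≤ transmission (pathGraph (n + 1)) 0 := by
  rw [← sum_range_id_eq_choose_two, ← Fin.sum_univ_eq_sum_range (fun i => i), transmission]
  gcongr with j
  simpa using pathGraph_le_add_dist 0 j

theorem two_mul_choose_three_le_sumDist_pathGraph (n : ℕ) :
    2 * (n + 1).choose 3 ≤ sumDist (pathGraph n) := by
  have h (i j : Fin n) : ((j : ℕ) - i) + (i - j) ≤ (pathGraph n).dist i j := by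
    have := pathGraph_le_add_dist i j
    have := pathGraph_le_add_dist j i
    rw [dist_comm] at this
    omega
  calc 2 * (n + 1).choose 3
      = ∑ i ∈ range n, ∑ j ∈ range n, (j - i) + ∑ j ∈ range n, ∑ i ∈ range n, (j - i) := by
        rw [sum_range_sum_range_tsub, sum_comm, sum_range_sum_range_tsub, two_mul]
    _ = ∑ i : Fin n, ∑ j : Fin n, (((j : ℕ) - i) + (i - j)) := by
        simp only [Finset.sum_range, sum_add_distrib]
    _ ≤ sumDist (pathGraph n) := by
        unfold sumDist
        gcongr with i _ j _
        exact h i j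

section Glue

variable {W : Type*} {G : SimpleGraph V} {H : SimpleGraph W} {v₁ : V} {v₂ : W}

@[simp] theorem glue_adj_inl_inl {x y : {x : V // x ≠ v₁}} :
    (glue G v₁ H v₂).Adj (.inl x) (.inl y) ↔ G.Adj x y := by
  simp only [glue, fromRel_adj, ne_eq, Sum.inl.injEq]
  exact ⟨fun h => h.2.elim id .symm, fun h => ⟨fun hxy => h.ne (congrArg _ hxy), .inl h⟩⟩

@[simp] theorem glue_adj_inl_inr {x : {x : V // x ≠ v₁}} {z : W} :
    (glue G v₁ H v₂).Adj (.inl x) (.inr z) ↔ z = v₂ ∧ G.Adj x v₁ := by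
  simp [glue]

@[simp] theorem glue_adj_inr_inl {x : {x : V // x ≠ v₁}} {z : W} :
    (glue G v₁ H v₂).Adj (.inr z) (.inl x) ↔ z = v₂ ∧ G.Adj v₁ x := by
  simp [glue, adj_comm]

@[simp] theorem glue_adj_inr_inr {z z' : W} :
    (glue G v₁ H v₂).Adj (.inr z) (.inr z') ↔ H.Adj z z' := by
  simp only [glue, fromRel_adj, ne_eq, Sum.inr.injEq]
  exact ⟨fun h => h.2.elim id .symm, fun h => ⟨h.ne, .inl h⟩⟩

variable (G H v₁ v₂)

def glueLeft [DecidableEq V] : G →g glue G v₁ H v₂ where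
  toFun x := if h : x = v₁ then .inr v₂ else .inl ⟨x, h⟩
  map_rel' {x y} h := by
    by_cases hx : x = v₁ <;> by_cases hy : y = v₁ <;> simp_all

def glueRight : H →g glue G v₁ H v₂ where
  toFun := .inr
  map_rel' h := glue_adj_inr_inr.2 h

def glueFst : {x : V // x ≠ v₁} ⊕ W → V := Sum.elim Subtype.val fun _ => v₁

def glueSnd : {x : V // x ≠ v₁} ⊕ W → W := Sum.elim (fun _ => v₂) id

def glueProj : glue G v₁ H v₂ →g G □ H where
  toFun a := (glueFst v₁ a, glueSnd v₁ v₂ a)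
  map_rel' {a b} h := by
    rcases a with x | z <;> rcases b with y | z' <;> simp_all [glueFst, glueSnd, boxProd_adj]

variable {G H v₁ v₂}

@[simp] theorem glueLeft_self [DecidableEq V] : glueLeft G H v₁ v₂ v₁ = .inr v₂ := by
  simp [glueLeft]

@[simp] theorem glueLeft_of_ne [DecidableEq V] {x : V} (h : x ≠ v₁) :
    glueLeft G H v₁ v₂ x = .inl ⟨x, h⟩ := by
  simp [glueLeft, h]

theorem glue_connected (hG : G.Connected) (hH : H.Connected) : (glue G v₁ H v₂).Connected := by
  classical
  have hreach : ∀ a, (glue G v₁ H v₂).Reachable (.inr v₂) a := by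
    rintro (x | z)
    · simpa [x.2] using (hG v₁ x).map (glueLeft G H v₁ v₂)
    · exact (hH v₂ z).map (glueRight G H v₁ v₂)
  exact (connected_iff _).2 ⟨fun a b => (hreach a).symm.trans (hreach b), ⟨.inr v₂⟩⟩

theorem dist_glue (hG : G.Connected) (hH : H.Connected) (a b : {x : V // x ≠ v₁} ⊕ W) :
    (glue G v₁ H v₂).dist a b =
      G.dist (glueFst v₁ a) (glueFst v₁ b) + H.dist (glueSnd v₁ v₂ a) (glueSnd v₁ v₂ b) := by
  classical
  refine le_antisymm ?_ ?_
  · have hL (x y : V) := (glueLeft G H v₁ v₂).dist_le (hG x y)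
    have hR (z z' : W) := (glueRight G H v₁ v₂).dist_le (hH z z')
    have hmixed (x : {x : V // x ≠ v₁}) (z : W) :
        (glue G v₁ H v₂).dist (.inl x) (.inr z) ≤ G.dist x v₁ + H.dist v₂ z :=
      ((glue_connected hG hH).dist_triangle (v := .inr v₂)).trans
        (add_le_add (by simpa [x.2] using hL x v₁) (hR v₂ z))
    rcases a with x | z <;> rcases b with y | z'
    · simpa [glueFst, glueSnd, x.2, y.2] using hL x y
    · simpa [glueFst, glueSnd] using hmixed x z'
    · simpa [glueFst, glueSnd, dist_comm] using hmixed y z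
    · simpa [glueFst, glueSnd, glueRight] using hR z z'
  · have := (glueProj G H v₁ v₂).dist_le (glue_connected hG hH a b)
    rwa [dist_boxProd (hG _ _) (hH _ _)] at this

end Glue

section GlueSum

variable {W : Type*} [Fintype V] [DecidableEq V] [Fintype W] {v₁ : V}

theorem sum_glueFst [Nonempty W] (f : V → ℕ) :
    ∑ a, f (glueFst (W := W) v₁ a) = ∑ x, f x + (Fintype.card W - 1) * f v₁ := by
  obtain ⟨k, hk⟩ : ∃ k, Fintype.card W = k + 1 :=
    Nat.exists_eq_succ_of_ne_zero Fintype.card_ne_zero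
  rw [Fintype.sum_sum_type, Fintype.sum_eq_add_sum_subtype_ne f v₁]
  simp only [glueFst, Sum.elim_inl, Sum.elim_inr, sum_const, card_univ, smul_eq_mul, hk,
    add_tsub_cancel_right]
  ring

theorem sum_glueSnd (v₂ : W) (g : W → ℕ) :
    ∑ a, g (glueSnd v₁ v₂ a) = ∑ z, g z + (Fintype.card V - 1) * g v₂ := by
  rw [Fintype.sum_sum_type]
  simp [glueSnd, add_comm]

theorem sumDist_glue {G : SimpleGraph V} {H : SimpleGraph W} {v₂ : W} (hG : G.Connected)
    (hH : H.Connected) :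
    sumDist (glue G v₁ H v₂) = sumDist G + sumDist H +
      2 * (Fintype.card W - 1) * transmission G v₁ +
      2 * (Fintype.card V - 1) * transmission H v₂ := by
  have : Nonempty W := ⟨v₂⟩
  have hfst : ∑ a, ∑ b, G.dist (glueFst (W := W) v₁ a) (glueFst (W := W) v₁ b) =
      sumDist G + 2 * (Fintype.card W - 1) * transmission G v₁ := by
    simp only [sum_glueFst (G.dist _)]
    rw [sum_glueFst (fun x => ∑ y, G.dist x y + (Fintype.card W - 1) * G.dist x v₁)]
    simp only [sum_add_distrib, ← mul_sum, sum_dist_eq_transmission, dist_self, mul_zero,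
      add_zero]
    unfold sumDist transmission
    ring
  have hsnd : ∑ a, ∑ b, H.dist (glueSnd v₁ v₂ a) (glueSnd v₁ v₂ b) =
      sumDist H + 2 * (Fintype.card V - 1) * transmission H v₂ := by
    simp only [sum_glueSnd v₂ (H.dist _)]
    rw [sum_glueSnd v₂ (fun z => ∑ z', H.dist z z' + (Fintype.card V - 1) * H.dist z v₂)]
    simp only [sum_add_distrib, ← mul_sum, sum_dist_eq_transmission, dist_self, mul_zero,
      add_zero]
    unfold sumDist transmission
    ring
  rw [sumDist]
  simp only [dist_glue hG hH, sum_add_distrib]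
  rw [hfst, hsnd]
  ring

end GlueSum

theorem wiener_glue_lt_glue_path_general {W : Type*} [Fintype V] [Fintype W] [DecidableEq V]
    (T₁ : SimpleGraph V) (T₂ : SimpleGraph W) (hT₁ : T₁.IsTree) (hT₂ : T₂.IsTree)
    (ℓ : ℕ) (hcard₁ : Fintype.card V = ℓ + 1)
    (hnotpath : ¬ Nonempty (T₁ ≃g SimpleGraph.pathGraph (ℓ + 1)))
    (hcard₂ : 2 ≤ Fintype.card W) (v₁ : V) (v₂ : W) :
    wienerIndex (glue T₁ v₁ T₂ v₂) <
      wienerIndex (glue (SimpleGraph.pathGraph (ℓ + 1)) 0 T₂ v₂) := by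
  have hS : sumDist T₁ ≤ sumDist (pathGraph (ℓ + 1)) :=
    (sumDist_le_two_mul_choose_three hT₁.connected).trans
      (hcard₁ ▸ two_mul_choose_three_le_sumDist_pathGraph (ℓ + 1))
  have ht : transmission T₁ v₁ < transmission (pathGraph (ℓ + 1)) 0 := by
    have := transmission_lt_choose_two v₁ (G := T₁) (by rwa [hcard₁])
    rw [hcard₁] at this
    exact this.trans_le (choose_two_le_transmission_pathGraph ℓ)
  have hk : (Fintype.card W - 1) * transmission T₁ v₁ <
      (Fintype.card W - 1) * transmission (pathGraph (ℓ + 1)) 0 :=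
    Nat.mul_lt_mul_of_pos_left ht (by omega)
  have h₁ := sumDist_glue (v₁ := v₁) (v₂ := v₂) hT₁.connected hT₂.connected
  have h₂ := sumDist_glue (v₁ := (0 : Fin (ℓ + 1))) (v₂ := v₂) (pathGraph_connected ℓ)
    hT₂.connected
  rw [hcard₁] at h₁
  rw [Fintype.card_fin] at h₂
  show sumDist _ / 2 < sumDist _ / 2
  simp only [mul_assoc] at h₁ h₂
  omega

/-- gluing a non-path tree `T₁` of order `ℓ + 1 > 1` at a vertex `v₂` of a
tree `T₂` yields a smaller Wiener index than gluing a path with `ℓ + 1` vertices (by one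
of its endpoints) at `v₂`. -/
theorem wiener_glue_lt_glue_path {W : Type*} [Fintype V] [Fintype W] [DecidableEq V]
    (T₁ : SimpleGraph V) (T₂ : SimpleGraph W) (hT₁ : T₁.IsTree) (hT₂ : T₂.IsTree)
    (ℓ : ℕ) (hℓ : 1 ≤ ℓ) (hcard₁ : Fintype.card V = ℓ + 1)
    (hnotpath : ¬ Nonempty (T₁ ≃g SimpleGraph.pathGraph (ℓ + 1)))
    (hcard₂ : 2 ≤ Fintype.card W) (v₁ : V) (v₂ : W) :
    wienerIndex (glue T₁ v₁ T₂ v₂) <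
      wienerIndex (glue (SimpleGraph.pathGraph (ℓ + 1)) 0 T₂ v₂) :=
  wiener_glue_lt_glue_path_general T₁ T₂ hT₁ hT₂ ℓ hcard₁ hnotpath hcard₂ v₁ v₂
end

section
/- Let T be a tree on at least 2 vertices with a vertex v of degree at least 3, and suppose two distinct pendent paths P and P* are attached to v, of lengths a_1 and a_2 respectively, with a_1 ≥ a_2 ≥ 1. Let T' be the tree obtained from T by removing the leaf endpoint of P* and attaching it as a new leaf to the leaf endpoint of P. Then W(T) < W(T'). -/
open SimpleGraph

variable {V : Type*}

/-- `p` is a pendent path of length `a` attached to the vertex `v` of `T`: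
it starts at `v`, its consecutive vertices are adjacent, its internal vertices have
degree 2 in `T`, and its other endpoint is a leaf of `T`. -/
def IsPendentPath [Fintype V] (T : SimpleGraph V) (v : V) (a : ℕ)
    (p : Fin (a + 1) → V) : Prop :=
  p 0 = v ∧ Function.Injective p ∧
    (∀ i : Fin a, T.Adj (p i.castSucc) (p i.succ)) ∧
    (∀ i : Fin (a + 1), i ≠ 0 → i ≠ Fin.last a → vertexDegree T (p i) = 2) ∧
    vertexDegree T (p (Fin.last a)) = 1

/-!
Moving the leaf `w` of the shorter path to the end of the longer one changes no distance between
the other vertices, so the Wiener index changes exactly as the transmission of `w` does. In a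
connected graph of order `n`, the leaf of a pendent path of length `a` at `v` has transmission
`tr(v) + a (n - 1 - a)`. Comparing the transmission of `w` before and after the move gives a
gain of `(a₁ - a₂ + 1) (n - 1 - a₁ - a₂)`, which is positive because `v` has a neighbour on
neither path.
-/

namespace SimpleGraph

variable {G H : SimpleGraph V} {a b c u w x y : V}

lemma Walk.dist_add_dist_of_mem_support (W : G.Walk a b) (hW : W.length = G.dist a b)
    (hc : c ∈ W.support) : G.dist a c + G.dist c b = G.dist a b := by
  classical
  have hsplit : (W.takeUntil c hc).length + (W.dropUntil c hc).length = W.length := by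
    rw [← Walk.length_append, W.take_spec hc]
  have := dist_le (W.takeUntil c hc)
  have := dist_le (W.dropUntil c hc)
  have := (W.takeUntil c hc).reachable.dist_triangle_left b
  omega

lemma Connected.dist_eq_dist_add_dist_of_forall_adj (hG : G.Connected) {S : Set V}
    (hS : ∀ x ∈ S, ∀ y, G.Adj x y → y ∉ S → y = c) (hx : x ∈ S) (hu : u ∉ S) :
    G.dist x u = G.dist x c + G.dist c u := by
  obtain ⟨W, hW⟩ := hG.exists_walk_length_eq_dist x u
  obtain ⟨d, hd, hdS, hdS'⟩ := W.exists_boundary_dart S hx hu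
  have hc : c ∈ W.support := hS _ hdS _ d.adj hdS' ▸ W.dart_snd_mem_support_of_mem_darts hd
  exact (W.dist_add_dist_of_mem_support hW hc).symm

lemma Connected.dist_eq_dist_add_one_of_neighborSet_eq (hG : G.Connected)
    (hw : G.neighborSet w = {x}) (hu : u ≠ w) : G.dist w u = G.dist x u + 1 := by
  have hwx : G.Adj w x := by simp [← mem_neighborSet, hw]
  rw [hG.dist_eq_dist_add_dist_of_forall_adj (S := {w}) (c := x) ?_ rfl hu,
    dist_eq_one_iff_adj.mpr hwx, add_comm]
  intro z hz y hy _
  rw [Set.mem_singleton_iff.mp hz, ← mem_neighborSet, hw] at hy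
  exact hy

/-- A shortest walk between two vertices other than the leaf `w` avoids `w`. -/
lemma Connected.exists_walk_length_eq_dist_of_neighborSet_eq (hG : G.Connected)
    (hw : G.neighborSet w = {x}) (hGH : ∀ a b, a ≠ w → b ≠ w → G.Adj a b → H.Adj a b)
    (ha : a ≠ w) (hb : b ≠ w) : ∃ W : H.Walk a b, W.length = G.dist a b := by
  obtain ⟨W, hW⟩ := hG.exists_walk_length_eq_dist a b
  have hwW : w ∉ W.support := by
    intro hmem
    have h := W.dist_add_dist_of_mem_support hW hmem
    rw [dist_comm, hG.dist_eq_dist_add_one_of_neighborSet_eq hw ha,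
      hG.dist_eq_dist_add_one_of_neighborSet_eq hw hb, dist_comm] at h
    have : G.dist a b ≤ G.dist a x + G.dist x b := hG.dist_triangle
    omega
  have hedges : ∀ e ∈ W.edges, e ∈ H.edgeSet := by
    rintro ⟨c, d⟩ he
    exact hGH c d (fun h => hwW (h ▸ W.fst_mem_support_of_mem_edges he))
      (fun h => hwW (h ▸ W.snd_mem_support_of_mem_edges he)) (W.edges_subset_edgeSet he)
  exact ⟨W.transfer H hedges, by rw [Walk.length_transfer, hW]⟩

def moveLeaf (G : SimpleGraph V) (x w y : V) : SimpleGraph V :=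
  fromEdgeSet (insert s(w, y) (G.edgeSet \ {s(x, w)}))

lemma moveLeaf_adj_iff_of_ne (ha : a ≠ w) (hb : b ≠ w) :
    (G.moveLeaf x w y).Adj a b ↔ G.Adj a b := by
  simpa [moveLeaf, ha, hb] using fun h : G.Adj a b => h.ne

lemma neighborSet_moveLeaf (hw : G.neighborSet w = {x}) (hy : y ≠ w) :
    (G.moveLeaf x w y).neighborSet w = {y} := by
  ext z
  have hz : G.Adj w z ↔ z = x := by rw [← mem_neighborSet, hw, Set.mem_singleton_iff]
  simp only [moveLeaf, mem_neighborSet, fromEdgeSet_adj, Set.mem_insert_iff, Set.mem_sdiff,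
    mem_edgeSet, hz, Set.mem_singleton_iff]
  aesop

lemma Connected.moveLeaf (hG : G.Connected) (hw : G.neighborSet w = {x}) (hy : y ≠ w) :
    (G.moveLeaf x w y).Connected := by
  have hreach : ∀ a, (G.moveLeaf x w y).Reachable a y := by
    intro a
    by_cases ha : a = w
    · subst ha
      exact Adj.reachable (by simp [← mem_neighborSet, neighborSet_moveLeaf hw hy])
    · obtain ⟨W, -⟩ := hG.exists_walk_length_eq_dist_of_neighborSet_eq hw
        (fun a b ha hb => (moveLeaf_adj_iff_of_ne ha hb).mpr) ha hy
      exact ⟨W⟩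
  exact (connected_iff _).mpr ⟨fun a b => (hreach a).trans (hreach b).symm, ⟨y⟩⟩

lemma Connected.dist_moveLeaf (hG : G.Connected) (hw : G.neighborSet w = {x}) (hy : y ≠ w)
    (ha : a ≠ w) (hb : b ≠ w) : (G.moveLeaf x w y).dist a b = G.dist a b := by
  obtain ⟨W, hW⟩ := hG.exists_walk_length_eq_dist_of_neighborSet_eq hw
    (fun a b ha hb => (moveLeaf_adj_iff_of_ne ha hb).mpr) ha hb
  obtain ⟨W', hW'⟩ := (hG.moveLeaf hw hy).exists_walk_length_eq_dist_of_neighborSet_eq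
    (neighborSet_moveLeaf hw hy) (fun a b ha hb => (moveLeaf_adj_iff_of_ne ha hb).mp) ha hb
  exact le_antisymm (hW ▸ dist_le W) (hW' ▸ dist_le W')

lemma Connected.transmission_moveLeaf [Fintype V] (hG : G.Connected)
    (hw : G.neighborSet w = {x}) (hy : y ≠ w) :
    transmission (G.moveLeaf x w y) w + G.dist y w + 1 = transmission G y + Fintype.card V := by
  classical
  have hdist : ∀ u ∈ Finset.univ.erase w, (G.moveLeaf x w y).dist w u = G.dist y u + 1 :=
    fun u hu => by
      rw [(hG.moveLeaf hw hy).dist_eq_dist_add_one_of_neighborSet_eq (neighborSet_moveLeaf hw hy)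
        (Finset.ne_of_mem_erase hu), hG.dist_moveLeaf hw hy hy (Finset.ne_of_mem_erase hu)]
  unfold transmission
  rw [← Finset.add_sum_erase _ _ (Finset.mem_univ w),
    ← Finset.add_sum_erase _ _ (Finset.mem_univ w), Finset.sum_congr rfl hdist,
    Finset.sum_add_distrib, dist_self, Finset.sum_const,
    Finset.card_erase_of_mem (Finset.mem_univ w), Finset.card_univ, smul_eq_mul, mul_one]
  have := Fintype.card_pos_iff.mpr ⟨w⟩
  omega

end SimpleGraph

lemma sum_sum_dist_eq_two_mul_transmission_add [Fintype V] [DecidableEq V] (G : SimpleGraph V)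
    (w : V) :
    ∑ a, ∑ b, G.dist a b = 2 * transmission G w +
      ∑ a ∈ Finset.univ.erase w, ∑ b ∈ Finset.univ.erase w, G.dist a b := by
  have hrow : ∀ a, ∑ b, G.dist a b = G.dist w a + ∑ b ∈ Finset.univ.erase w, G.dist a b :=
    fun a => by rw [← Finset.add_sum_erase _ _ (Finset.mem_univ w), SimpleGraph.dist_comm]
  have hcol : ∑ a ∈ Finset.univ.erase w, G.dist w a = transmission G w :=
    Finset.sum_erase _ SimpleGraph.dist_self
  rw [← Finset.add_sum_erase _ _ (Finset.mem_univ w), Finset.sum_congr rfl fun a _ => hrow a,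
    Finset.sum_add_distrib, hcol]
  unfold transmission
  ring

lemma wienerIndex_lt_of_transmission_lt [Fintype V] {G H : SimpleGraph V} (w : V)
    (hdist : ∀ a b, a ≠ w → b ≠ w → G.dist a b = H.dist a b)
    (htr : transmission G w < transmission H w) : wienerIndex G < wienerIndex H := by
  classical
  have hrest : ∑ a ∈ Finset.univ.erase w, ∑ b ∈ Finset.univ.erase w, G.dist a b =
      ∑ a ∈ Finset.univ.erase w, ∑ b ∈ Finset.univ.erase w, H.dist a b :=
    Finset.sum_congr rfl fun a ha => Finset.sum_congr rfl fun b hb =>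
      hdist a b (Finset.ne_of_mem_erase ha) (Finset.ne_of_mem_erase hb)
  unfold wienerIndex
  rw [sum_sum_dist_eq_two_mul_transmission_add G w, sum_sum_dist_eq_two_mul_transmission_add H w,
    hrest]
  omega

namespace IsPendentPath

variable [Fintype V] {T : SimpleGraph V} {v : V} {a : ℕ} {p : Fin (a + 1) → V}

lemma apply_zero (hp : IsPendentPath T v a p) : p 0 = v := hp.1

lemma injective (hp : IsPendentPath T v a p) : Function.Injective p := hp.2.1

lemma adj (hp : IsPendentPath T v a p) (k : Fin a) : T.Adj (p k.castSucc) (p k.succ) := hp.2.2.1 k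

lemma exists_of_adj (hp : IsPendentPath T v a p) {i : Fin (a + 1)} (hi : i ≠ 0) {y : V}
    (hy : T.Adj (p i) y) : ∃ j, p j = y ∧ ((j : ℕ) + 1 = i ∨ (i : ℕ) + 1 = j) := by
  obtain ⟨-, hinj, hadj, hdeg₂, hdeg₁⟩ := hp
  have hi₀ : 0 < (i : ℕ) := Fin.pos_iff_ne_zero.mpr hi
  have hprev : T.Adj (p i) (p ⟨i - 1, by omega⟩) := by
    have h := hadj ⟨i - 1, by omega⟩
    rw [show (⟨i - 1, _⟩ : Fin a).succ = i from Fin.ext (by simp; omega)] at h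
    exact h.symm
  have hfin : (T.neighborSet (p i)).Finite := Set.toFinite _
  by_cases hlast : i = Fin.last a
  · have hN : T.neighborSet (p i) = {p ⟨i - 1, by omega⟩} := by
      refine (Set.eq_of_subset_of_ncard_le (by simpa using hprev) ?_ hfin).symm
      rw [Set.ncard_singleton, ← Nat.card_coe_set_eq, hlast]
      exact hdeg₁.le
    refine ⟨⟨i - 1, by omega⟩, ?_, Or.inl (by simp; omega)⟩
    rw [← mem_neighborSet, hN] at hy
    exact hy.symm
  · have hia : (i : ℕ) < a := Fin.val_lt_last hlast
    have hnext : T.Adj (p i) (p ⟨i + 1, by omega⟩) := by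
      simpa using hadj ⟨i, hia⟩
    have hne : p ⟨i - 1, by omega⟩ ≠ p ⟨i + 1, by omega⟩ := fun h => by
      have := Fin.mk.inj_iff.mp (hinj h)
      omega
    have hN : T.neighborSet (p i) = {p ⟨i - 1, by omega⟩, p ⟨i + 1, by omega⟩} := by
      have hsub : {p ⟨i - 1, by omega⟩, p ⟨i + 1, by omega⟩} ⊆ T.neighborSet (p i) :=
        Set.insert_subset hprev (Set.singleton_subset_iff.mpr hnext)
      refine (Set.eq_of_subset_of_ncard_le hsub ?_ hfin).symm
      rw [Set.ncard_pair hne, ← Nat.card_coe_set_eq]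
      exact (hdeg₂ i hi hlast).le
    rw [← mem_neighborSet, hN] at hy
    rcases hy with rfl | rfl
    · exact ⟨_, rfl, Or.inl (by simp; omega)⟩
    · exact ⟨_, rfl, Or.inr rfl⟩

lemma val_eq_one_of_adj (hp : IsPendentPath T v a p) {i : Fin (a + 1)} (h : T.Adj v (p i)) :
    (i : ℕ) = 1 := by
  have hi : i ≠ 0 := by
    rintro rfl
    exact T.irrefl (hp.apply_zero ▸ h)
  obtain ⟨j, hj, hji | hij⟩ := hp.exists_of_adj hi h.symm
  · rw [hp.injective (hj.trans hp.apply_zero.symm)] at hji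
    simpa using hji.symm
  · rw [hp.injective (hj.trans hp.apply_zero.symm)] at hij
    simp at hij

lemma neighborSet_last (hp : IsPendentPath T v a p) (ha : 0 < a) :
    T.neighborSet (p (Fin.last a)) = {p ⟨a - 1, by omega⟩} := by
  ext y
  constructor
  · intro hy
    have hlast : Fin.last a ≠ 0 := by simp [Fin.ext_iff]; omega
    obtain ⟨j, rfl, hj | hj⟩ := hp.exists_of_adj hlast hy
    · rw [Fin.val_last] at hj
      exact congrArg p (Fin.ext (by simp only; omega))
    · have := j.isLt
      rw [Fin.val_last] at hj
      omega
  · rintro rfl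
    have h := hp.adj ⟨a - 1, by omega⟩
    rw [show (⟨a - 1, _⟩ : Fin a).succ = Fin.last a from Fin.ext (by simp; omega)] at h
    exact h.symm

lemma dist_eq_dist_add_dist (hp : IsPendentPath T v a p) (hT : T.Connected) (k : Fin a)
    {m : Fin (a + 1)} (hm : k.castSucc < m) {u : V} (hu : ∀ j, k.castSucc < j → p j ≠ u) :
    T.dist (p m) u = T.dist (p m) (p k.castSucc) + T.dist (p k.castSucc) u := by
  refine hT.dist_eq_dist_add_dist_of_forall_adj (S := {z | ∃ j, k.castSucc < j ∧ p j = z}) ?_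
    ⟨m, hm, rfl⟩ fun ⟨j, hj, hju⟩ => hu j hj hju
  rintro _ ⟨j, hj, rfl⟩ y hy hyS
  obtain ⟨l, rfl, hl | hl⟩ := hp.exists_of_adj (Fin.ne_zero_of_lt hj) hy
  · by_cases hkl : k.castSucc < l
    · exact absurd ⟨l, hkl, rfl⟩ hyS
    · rw [Fin.lt_def] at hj hkl
      exact congrArg p (Fin.ext (by omega))
  · exact absurd ⟨l, by rw [Fin.lt_def] at hj ⊢; omega, rfl⟩ hyS

lemma dist_eq (hp : IsPendentPath T v a p) (hT : T.Connected) {i j : Fin (a + 1)} (hij : i ≤ j) :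
    T.dist (p i) (p j) = j - i := by
  obtain ⟨n, hn⟩ : ∃ n, (j : ℕ) = i + n :=
    ⟨j - i, by rw [Fin.le_iff_val_le_val] at hij; omega⟩
  induction n generalizing j with
  | zero => simp [Fin.ext (hn.trans (add_zero _))]
  | succ n ih =>
    set k : Fin a := ⟨i + n, by omega⟩
    have hkj : k.succ = j := Fin.ext (by simp [k]; omega)
    have hik : T.dist (p i) (p k.castSucc) = n := by
      rw [ih (Fin.le_iff_val_le_val.mpr (by simp [k])) rfl]
      simp [k]
    have hcut := hp.dist_eq_dist_add_dist hT k (m := j)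
      (by rw [← hkj]; exact Fin.castSucc_lt_succ) (u := p i) fun l hl hli => by
        rw [hp.injective hli, Fin.lt_def] at hl
        simp [k] at hl
    rw [dist_comm, hcut, ← hkj, dist_eq_one_iff_adj.mpr (hp.adj k).symm, dist_comm, hik, hkj]
    omega

lemma dist_eq_add_dist (hp : IsPendentPath T v a p) (hT : T.Connected) (i : Fin (a + 1)) {u : V}
    (hu : ∀ j, p j ≠ u) : T.dist (p i) u = i + T.dist v u := by
  rcases eq_or_ne i 0 with rfl | hi
  · simp [hp.apply_zero]
  have ha : 0 < a := by
    have := Fin.pos_iff_ne_zero.mpr hi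
    omega
  rw [hp.dist_eq_dist_add_dist hT ⟨0, ha⟩ (Fin.pos_iff_ne_zero.mpr hi) fun j _ => hu j,
    show (⟨0, ha⟩ : Fin a).castSucc = 0 from rfl, hp.apply_zero, dist_comm, ← hp.apply_zero,
    hp.dist_eq hT (Fin.zero_le i)]
  simp

/-- The path part of the transmission is the same from either end of the path, and every other
vertex is exactly `a` farther from the leaf than from `v`. -/
lemma transmission_last_add_mul (hp : IsPendentPath T v a p) (hT : T.Connected) :
    transmission T (p (Fin.last a)) + a * (a + 1) = transmission T v + a * Fintype.card V := by
  classical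
  set s := Finset.univ.map ⟨p, hp.injective⟩
  have hsplit (x : V) : transmission T x = ∑ i, T.dist x (p i) + ∑ u ∈ sᶜ, T.dist x u := by
    rw [transmission, ← Finset.sum_add_sum_compl s, Finset.sum_map]
    rfl
  have hpath : ∑ i, T.dist (p (Fin.last a)) (p i) = ∑ i, T.dist v (p i) := by
    rw [← Equiv.sum_comp Fin.revPerm fun i => T.dist v (p i)]
    refine Finset.sum_congr rfl fun i _ => ?_
    rw [dist_comm, hp.dist_eq hT (Fin.le_last i), ← hp.apply_zero, hp.dist_eq hT (Fin.zero_le _)]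
    simp [Fin.val_rev]
  have hrest : ∑ u ∈ sᶜ, T.dist (p (Fin.last a)) u = ∑ u ∈ sᶜ, (a + T.dist v u) :=
    Finset.sum_congr rfl fun u hu => by
      rw [hp.dist_eq_add_dist hT _ fun j hj => Finset.mem_compl.mp hu (by simp [s, ← hj])]
      simp
  have hcard : sᶜ.card + (a + 1) = Fintype.card V := by
    rw [Finset.card_compl, Finset.card_map, Finset.card_univ, Fintype.card_fin]
    have := Finset.card_le_univ s
    rw [Finset.card_map, Finset.card_univ, Fintype.card_fin] at this
    omega
  rw [hsplit, hsplit, hpath, hrest, Finset.sum_add_distrib, Finset.sum_const, smul_eq_mul,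
    ← hcard]
  ring

end IsPendentPath

lemma exists_adj_ne_ne_of_three_le_vertexDegree {T : SimpleGraph V} {v : V}
    (h : 3 ≤ vertexDegree T v) (x y : V) : ∃ z, T.Adj v z ∧ z ≠ x ∧ z ≠ y := by
  have hxy : ({x, y} : Set V).ncard < (T.neighborSet v).ncard := by
    have := Set.ncard_insert_le x {y}
    rw [Set.ncard_singleton] at this
    rw [← Nat.card_coe_set_eq]
    exact lt_of_le_of_lt this h
  obtain ⟨z, hz, hzxy⟩ := Set.exists_mem_notMem_of_ncard_lt_ncard hxy
  simp only [Set.mem_insert_iff, Set.mem_singleton_iff, not_or] at hzxy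
  exact ⟨z, hz, hzxy⟩

lemma IsPendentPath.add_add_two_le_card [Fintype V] {T : SimpleGraph V} {v : V} {a₁ a₂ : ℕ}
    {p : Fin (a₁ + 1) → V} {q : Fin (a₂ + 1) → V} (hp : IsPendentPath T v a₁ p)
    (hq : IsPendentPath T v a₂ q) (ha₁ : 0 < a₁) (ha₂ : 0 < a₂)
    (hdisj : ∀ i j, p i = q j → i = 0 ∧ j = 0) (hdeg : 3 ≤ vertexDegree T v) :
    a₁ + a₂ + 2 ≤ Fintype.card V := by
  classical
  obtain ⟨o, hvo, hop, hoq⟩ :=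
    exists_adj_ne_ne_of_three_le_vertexDegree hdeg (p ⟨1, by omega⟩) (q ⟨1, by omega⟩)
  set A := Finset.univ.map ⟨p, hp.injective⟩ ∪ (Finset.univ.erase 0).map ⟨q, hq.injective⟩
  have hA : A.card = a₁ + 1 + a₂ := by
    rw [Finset.card_union_of_disjoint, Finset.card_map, Finset.card_map, Finset.card_erase_of_mem
      (Finset.mem_univ 0), Finset.card_univ, Fintype.card_fin, Finset.card_univ, Fintype.card_fin]
    · rfl
    · rw [Finset.disjoint_left]
      simp only [Finset.mem_map, Finset.mem_univ, Finset.mem_erase, true_and, and_true,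
        Function.Embedding.coeFn_mk, not_exists, not_and]
      rintro _ ⟨i, rfl⟩ j hj hji
      exact hj (hdisj i j hji.symm).2
  have hoA : o ∉ A := by
    simp only [A, Finset.mem_union, Finset.mem_map, Finset.mem_univ, Finset.mem_erase, true_and,
      and_true, Function.Embedding.coeFn_mk, not_or, not_exists]
    refine ⟨fun i hi => hop ?_, fun j hj => hoq ?_⟩
    · rw [← hi] at hvo ⊢
      exact congrArg p (Fin.ext (hp.val_eq_one_of_adj hvo))
    · rw [← hj.2] at hvo ⊢
      exact congrArg q (Fin.ext (hq.val_eq_one_of_adj hvo))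
  have := Finset.card_lt_univ_of_notMem hoA
  omega

/-- if two distinct pendent paths of lengths `a₁ ≥ a₂ ≥ 1` are attached to a
vertex `v` of degree at least 3 of a tree `T`, then moving the leaf endpoint of the
shorter pendent path to the leaf endpoint of the longer one strictly increases the
Wiener index. -/
theorem wiener_lt_of_pendent_path_move [Fintype V] (T : SimpleGraph V)
    (hT : T.IsTree) (v : V)
    (hdeg : 3 ≤ vertexDegree T v) (a₁ a₂ : ℕ) (ha₂ : 1 ≤ a₂) (ha : a₂ ≤ a₁)
    (p : Fin (a₁ + 1) → V) (q : Fin (a₂ + 1) → V)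
    (hp : IsPendentPath T v a₁ p) (hq : IsPendentPath T v a₂ q)
    (hdisj : ∀ (i : Fin (a₁ + 1)) (j : Fin (a₂ + 1)), p i = q j → i = 0 ∧ j = 0) :
    wienerIndex T <
      wienerIndex (SimpleGraph.fromEdgeSet
        (insert s(q (Fin.last a₂), p (Fin.last a₁))
          (T.edgeSet \ {s(q ⟨a₂ - 1, by omega⟩, q (Fin.last a₂))}))) := by
  change wienerIndex T <
    wienerIndex (T.moveLeaf (q ⟨a₂ - 1, by omega⟩) (q (Fin.last a₂)) (p (Fin.last a₁)))
  have hT := hT.connected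
  have hw := hq.neighborSet_last ha₂
  have hpw : ∀ i, p i ≠ q (Fin.last a₂) := fun i h => by
    have := congrArg Fin.val (hdisj i _ h).2
    simp only [Fin.val_last, Fin.val_zero] at this
    omega
  have hdist : T.dist (p (Fin.last a₁)) (q (Fin.last a₂)) = a₁ + a₂ := by
    rw [hp.dist_eq_add_dist hT _ hpw, ← hq.apply_zero, hq.dist_eq hT (Fin.zero_le _)]
    simp
  have hmove := hT.transmission_moveLeaf hw (hpw (Fin.last a₁))
  have htp := hp.transmission_last_add_mul hT
  have htq := hq.transmission_last_add_mul hT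
  obtain ⟨k, hk⟩ :=
    Nat.exists_eq_add_of_le (hp.add_add_two_le_card hq (by omega) ha₂ hdisj hdeg)
  refine wienerIndex_lt_of_transmission_lt (q (Fin.last a₂))
    (fun a b ha hb => (hT.dist_moveLeaf hw (hpw (Fin.last a₁)) ha hb).symm) ?_
  rw [hdist] at hmove
  rw [hk] at htp htq hmove
  nlinarith [Nat.mul_le_mul_right k ha]
end

section
/- For any odd integer n ≥ 7, the starlike tree S((n−1)/2, (n−5)/2, 2) is transmission irregular if and only if none of the numbers n − 4, n, 2n − 6 and 2n − 2 is a perfect square. -/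
open SimpleGraph

variable {V : Type*}

/-!
Write a vertex of `S(a, b, c)` at depth `d` on a branch of length `ℓ`. Distances in the tree are
explicit (`|d - d'|` on a common branch, `d + d'` otherwise), and summing them branch by branch
gives `Tr(v) = Tr(center) + d (a + b + c - 2ℓ) + d²`.

For `S(k + 2, k, 2)`, i.e. `n = 2k + 5`, this offset is `d²` on the long branch, `(d + 2)² - 4`
on the middle one, and `2k + 1`, `4k + 4` on the short one. The first two families never meet,
since `s² + 4` is a square only for `s = 0`, so two transmissions coincide exactly when
`2k + 1` or `4k + 4` is a square or a square minus `4`: that is, when one of `n - 4`, `n`,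
`2n - 6`, `2n - 2` is a square.
-/

open Finset

namespace SimpleGraph

variable {G : SimpleGraph V}

theorem le_length_of_forall_adj_le_add_one (D : V → V → ℕ) (hself : ∀ x, D x x = 0)
    (hadj : ∀ x x' y, G.Adj x x' → D x y ≤ D x' y + 1) {x y : V} (w : G.Walk x y) :
    D x y ≤ w.length := by
  induction w with
  | nil => simp [hself]
  | cons h _ ih => simpa using (hadj _ _ _ h).trans (Nat.add_le_add_right ih 1)

theorem exists_walk_length_eq_of_descent (D : V → V → ℕ) (r : V → ℕ)
    (hself : ∀ x, D x x = 0) (hsymm : ∀ x y, D x y = D y x)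
    (hdesc : ∀ x y, x ≠ y → r y ≤ r x → ∃ z, G.Adj x z ∧ D z y + 1 = D x y) (x y : V) :
    ∃ w : G.Walk x y, w.length = D x y := by
  induction hd : D x y using Nat.strong_induction_on generalizing x y with
  | _ d ih =>
    by_cases hxy : x = y
    · subst hxy
      exact ⟨.nil, by simp [← hd, hself]⟩
    rcases le_total (r y) (r x) with hle | hle
    · obtain ⟨z, hxz, hz⟩ := hdesc x y hxy hle
      obtain ⟨w, hw⟩ := ih (D z y) (by omega) z y rfl
      exact ⟨.cons hxz w, by simp [hw]; omega⟩
    · obtain ⟨z, hyz, hz⟩ := hdesc y x (Ne.symm hxy) hle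
      obtain ⟨w, hw⟩ := ih (D x z) (by rw [hsymm x z, ← hd, hsymm x y]; omega) x z rfl
      exact ⟨w.concat hyz.symm, by rw [Walk.length_concat, hw, hsymm x z, ← hd, hsymm x y, hz]⟩

theorem dist_eq_of_descent (D : V → V → ℕ) (r : V → ℕ)
    (hself : ∀ x, D x x = 0) (hsymm : ∀ x y, D x y = D y x)
    (hadj : ∀ x x' y, G.Adj x x' → D x y ≤ D x' y + 1)
    (hdesc : ∀ x y, x ≠ y → r y ≤ r x → ∃ z, G.Adj x z ∧ D z y + 1 = D x y) (x y : V) :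
    G.dist x y = D x y := by
  obtain ⟨w, hw⟩ := exists_walk_length_eq_of_descent D r hself hsymm hdesc x y
  obtain ⟨p, hp⟩ := Reachable.exists_walk_length_eq_dist ⟨w⟩
  exact le_antisymm (hw ▸ dist_le w) (hp ▸ le_length_of_forall_adj_le_add_one D hself hadj p)

end SimpleGraph

theorem two_mul_sum_range_natCast (n : ℕ) : 2 * ∑ k ∈ range n, (k : ℤ) = n * (n - 1) := by
  induction n with
  | zero => simp
  | succ n ih => rw [sum_range_succ, mul_add, ih]; push_cast; ring

theorem two_mul_sum_range_add_succ (d ℓ : ℕ) :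
    2 * ((∑ k ∈ range ℓ, (d + (k + 1)) : ℕ) : ℤ) = 2 * d * ℓ + ℓ * (ℓ + 1) := by
  have h := two_mul_sum_range_natCast (ℓ + 1)
  rw [sum_range_succ'] at h
  push_cast [sum_add_distrib, sum_const, card_range, nsmul_eq_mul] at h ⊢
  linarith

theorem two_mul_sum_range_dist_succ {d ℓ : ℕ} (h : d ≤ ℓ) :
    2 * ((∑ k ∈ range ℓ, Nat.dist d (k + 1) : ℕ) : ℤ) = d * (d - 1) + (ℓ - d) * (ℓ - d + 1) := by
  obtain ⟨e, rfl⟩ := Nat.exists_eq_add_of_le h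
  have hlow : ∑ k ∈ range d, Nat.dist d (k + 1) = ∑ k ∈ range d, k := by
    rw [← sum_range_reflect]
    exact sum_congr rfl fun k hk => by simp only [Nat.dist, mem_range] at hk ⊢; omega
  have hhigh : ∑ k ∈ range e, Nat.dist d (d + k + 1) = ∑ k ∈ range (e + 1), k := by
    rw [sum_range_succ', add_zero]
    exact sum_congr rfl fun k _ => by simp only [Nat.dist]; omega
  have h1 := two_mul_sum_range_natCast d
  have h2 := two_mul_sum_range_natCast (e + 1)
  rw [sum_range_add, hlow, hhigh]
  push_cast at h1 h2 ⊢
  linarith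

theorem sum_range_add_add_add_one {M : Type*} [AddCommMonoid M] (a b c : ℕ) (f : ℕ → M) :
    ∑ y ∈ range (a + b + c + 1), f y =
      f 0 + ∑ k ∈ range a, f (k + 1) + ∑ k ∈ range b, f (a + k + 1) +
        ∑ k ∈ range c, f (a + b + k + 1) := by
  rw [sum_range_succ', sum_range_add, sum_range_add]
  simp only [add_assoc]
  abel

def starBranch (a b x : ℕ) : ℕ := if x ≤ a then 0 else if x ≤ a + b then 1 else 2

def starDepth (a b x : ℕ) : ℕ := if x ≤ a then x else if x ≤ a + b then x - a else x - (a + b)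

def starParent (a b x : ℕ) : ℕ := if starDepth a b x ≤ 1 then 0 else x - 1

def starDist (a b x y : ℕ) : ℕ :=
  if starBranch a b x = starBranch a b y then Nat.dist (starDepth a b x) (starDepth a b y)
  else starDepth a b x + starDepth a b y

def starBranchLength (a b c x : ℕ) : ℕ := if x ≤ a then a else if x ≤ a + b then b else c

def starOffset (a b c x : ℕ) : ℤ :=
  starDepth a b x * ((a + b + c : ℤ) - 2 * starBranchLength a b c x) + (starDepth a b x : ℤ) ^ 2

section Starlike

variable {a b c : ℕ}

theorem starlike_adj_iff (x y : Fin (a + b + c + 1)) :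
    (starlike a b c).Adj x y ↔
      (x.val = starParent a b y ∧ 0 < starDepth a b y) ∨
        (y.val = starParent a b x ∧ 0 < starDepth a b x) := by
  rw [starlike, fromRel_adj, ne_eq, Fin.ext_iff]
  unfold starParent starDepth
  split_ifs <;> omega

theorem starDist_parent_add_one {x y : ℕ} (hxy : x ≠ y) (hd : starDepth a b y ≤ starDepth a b x) :
    0 < starDepth a b x ∧ starDist a b (starParent a b x) y + 1 = starDist a b x y := by
  unfold starDist starParent starBranch starDepth Nat.dist at *
  split_ifs at * <;> omega

theorem starDist_le_starDist_parent_add_one {x : ℕ} (hx : 0 < starDepth a b x) (y : ℕ) :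
    starDist a b x y ≤ starDist a b (starParent a b x) y + 1 ∧
      starDist a b (starParent a b x) y ≤ starDist a b x y + 1 := by
  unfold starDist starParent starBranch starDepth Nat.dist at *
  split_ifs at * <;> omega

theorem starlike_dist (x y : Fin (a + b + c + 1)) :
    (starlike a b c).dist x y = starDist a b x y := by
  refine dist_eq_of_descent (fun x y : Fin _ => starDist a b x y) (fun x => starDepth a b x)
    (fun x => by simp [starDist]) (fun x y => ?_) (fun x x' y hadj => ?_)
    (fun x y hxy hd => ?_) x y
  · unfold starDist
    split_ifs <;> simp_all [Nat.dist_comm, add_comm]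
  · rcases (starlike_adj_iff x x').mp hadj with ⟨hx, hd⟩ | ⟨hx', hd⟩
    · exact hx ▸ (starDist_le_starDist_parent_add_one hd y).2
    · exact hx' ▸ (starDist_le_starDist_parent_add_one hd y).1
  · obtain ⟨hpos, hstep⟩ := starDist_parent_add_one (Fin.val_injective.ne hxy) hd
    have hlt : starParent a b x < a + b + c + 1 := by
      unfold starParent; split_ifs <;> omega
    exact ⟨⟨_, hlt⟩, (starlike_adj_iff _ _).mpr (Or.inr ⟨rfl, hpos⟩), hstep⟩

theorem sum_starDist_branch (x i ℓ : ℕ) (v : ℕ → ℕ)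
    (hv : ∀ k < ℓ, starBranch a b (v k) = i ∧ starDepth a b (v k) = k + 1) :
    ∑ k ∈ range ℓ, starDist a b x (v k) =
      if starBranch a b x = i then ∑ k ∈ range ℓ, Nat.dist (starDepth a b x) (k + 1)
      else ∑ k ∈ range ℓ, (starDepth a b x + (k + 1)) := by
  split_ifs with hx <;>
  refine sum_congr rfl fun k hk => ?_ <;>
  obtain ⟨hb, hd⟩ := hv k (mem_range.mp hk) <;>
  simp [starDist, hb, hd, hx]

theorem two_mul_transmission_starlike (x : Fin (a + b + c + 1)) :
    2 * (transmission (starlike a b c) x : ℤ) =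
      a * (a + 1) + b * (b + 1) + c * (c + 1) + 2 * starOffset a b c x := by
  have hsum : transmission (starlike a b c) x = ∑ y ∈ range (a + b + c + 1), starDist a b x y := by
    simp only [transmission, starlike_dist]
    exact Fin.sum_univ_eq_sum_range (starDist a b x) _
  have hcenter : starDist a b x 0 = starDepth a b x := by
    unfold starDist starBranch starDepth Nat.dist; split_ifs <;> omega
  have h0 : ∀ k < a, starBranch a b (k + 1) = 0 ∧ starDepth a b (k + 1) = k + 1 := fun k hk => by
    unfold starBranch starDepth; constructor <;> split_ifs <;> omega
  have h1 : ∀ k < b, starBranch a b (a + k + 1) = 1 ∧ starDepth a b (a + k + 1) = k + 1 :=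
    fun k hk => by unfold starBranch starDepth; constructor <;> split_ifs <;> omega
  have h2 : ∀ k < c, starBranch a b (a + b + k + 1) = 2 ∧ starDepth a b (a + b + k + 1) = k + 1 :=
    fun k hk => by unfold starBranch starDepth; constructor <;> split_ifs <;> omega
  rw [sum_range_add_add_add_one, hcenter, sum_starDist_branch x 0 a _ h0,
    sum_starDist_branch x 1 b _ h1, sum_starDist_branch x 2 c _ h2] at hsum
  have hA := two_mul_sum_range_add_succ (starDepth a b x) a
  have hB := two_mul_sum_range_add_succ (starDepth a b x) b
  have hC := two_mul_sum_range_add_succ (starDepth a b x) c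
  unfold starOffset
  rw [hsum]
  by_cases hxa : x.val ≤ a
  · have hO := two_mul_sum_range_dist_succ (d := starDepth a b x) (ℓ := a)
      (by simp [starDepth, hxa])
    simp only [starBranch, starBranchLength, if_pos hxa, ↓reduceIte, zero_ne_one,
      OfNat.zero_ne_ofNat]
    push_cast at hA hB hC hO ⊢
    linarith
  by_cases hxb : x.val ≤ a + b
  · have hO := two_mul_sum_range_dist_succ (d := starDepth a b x) (ℓ := b)
      (by simp only [starDepth, hxa, hxb, ↓reduceIte]; omega)
    simp only [starBranch, starBranchLength, if_neg hxa, if_pos hxb, ↓reduceIte, one_ne_zero,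
      OfNat.one_ne_ofNat]
    push_cast at hA hB hC hO ⊢
    linarith
  · have hO := two_mul_sum_range_dist_succ (d := starDepth a b x) (ℓ := c)
      (by simp only [starDepth, hxa, hxb, ↓reduceIte]; omega)
    simp only [starBranch, starBranchLength, if_neg hxa, if_neg hxb, ↓reduceIte,
      OfNat.ofNat_ne_zero, OfNat.ofNat_ne_one]
    push_cast at hA hB hC hO ⊢
    linarith

theorem transIrregular_starlike_iff (h : 0 < a + b + c) :
    TransIrregular (starlike a b c) ↔
      Function.Injective (fun x : Fin (a + b + c + 1) => starOffset a b c x) := by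
  have htr (x y : Fin (a + b + c + 1)) :
      transmission (starlike a b c) x = transmission (starlike a b c) y ↔
        starOffset a b c x = starOffset a b c y := by
    have hx := two_mul_transmission_starlike x
    have hy := two_mul_transmission_starlike y
    constructor <;> intro hxy
    · rw [hxy] at hx; linarith
    · have : (transmission (starlike a b c) x : ℤ) = transmission (starlike a b c) y := by
        linarith
      exact_mod_cast this
  simp only [TransIrregular, Fintype.card_fin, Function.Injective, htr]
  exact and_iff_right (by omega)

end Starlike

theorem Nat.sq_add_four_ne_sq {s t : ℕ} (ht : 3 ≤ t) : s ^ 2 + 4 ≠ t ^ 2 := by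
  intro h
  have hst : s < t := by nlinarith
  obtain ⟨d, rfl⟩ : ∃ d, t = s + 1 + d := ⟨t - (s + 1), by omega⟩
  rcases d with _ | d
  · have : 2 * s + 1 = 4 := by ring_nf at h; linarith
    omega
  · nlinarith

section StarlikeAddTwo

variable {k : ℕ}

theorem starOffset_eq_sq_of_le {x : ℕ} (hx : x ≤ k + 2) :
    starOffset (k + 2) k 2 x = (x : ℤ) ^ 2 := by
  simp only [starOffset, starDepth, starBranchLength, if_pos hx]
  push_cast
  ring

theorem starOffset_add_add_four_eq_sq {s : ℕ} (hs : 3 ≤ s) (hsk : s ≤ k + 2) :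
    starOffset (k + 2) k 2 (k + s) + 4 = (s : ℤ) ^ 2 := by
  have h1 : ¬ k + s ≤ k + 2 := by omega
  have h2 : k + s ≤ k + 2 + k := by omega
  simp only [starOffset, starDepth, starBranchLength, if_neg h1, if_pos h2]
  rw [Nat.cast_sub (by omega)]
  push_cast
  ring

theorem starOffset_two_mul_add_three : starOffset (k + 2) k 2 (2 * k + 3) = 2 * k + 1 := by
  have h1 : ¬ 2 * k + 3 ≤ k + 2 := by omega
  have h2 : ¬ 2 * k + 3 ≤ k + 2 + k := by omega
  simp only [starOffset, starDepth, starBranchLength, if_neg h1, if_neg h2,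
    show 2 * k + 3 - (k + 2 + k) = 1 by omega]
  push_cast
  ring

theorem starOffset_two_mul_add_four : starOffset (k + 2) k 2 (2 * k + 4) = 4 * k + 4 := by
  have h1 : ¬ 2 * k + 4 ≤ k + 2 := by omega
  have h2 : ¬ 2 * k + 4 ≤ k + 2 + k := by omega
  simp only [starOffset, starDepth, starBranchLength, if_neg h1, if_neg h2,
    show 2 * k + 4 - (k + 2 + k) = 2 by omega]
  push_cast
  ring

theorem starOffset_eq_sq_or_add_four_eq_sq {x : ℕ} (hx : x ≤ 2 * k + 2) :
    (x ≤ k + 2 ∧ starOffset (k + 2) k 2 x = (x : ℤ) ^ 2) ∨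
      ∃ s, 3 ≤ s ∧ x = k + s ∧ starOffset (k + 2) k 2 x + 4 = (s : ℤ) ^ 2 := by
  by_cases h : x ≤ k + 2
  · exact Or.inl ⟨h, starOffset_eq_sq_of_le h⟩
  · obtain ⟨s, rfl⟩ : ∃ s, x = k + s := ⟨x - k, by omega⟩
    exact Or.inr ⟨s, by omega, rfl, starOffset_add_add_four_eq_sq (by omega) (by omega)⟩

theorem eq_of_starOffset_eq {x y : ℕ} (hx : x ≤ 2 * k + 2) (hy : y ≤ 2 * k + 2)
    (h : starOffset (k + 2) k 2 x = starOffset (k + 2) k 2 y) : x = y := by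
  have sq_inj {s t : ℕ} (hst : (s : ℤ) ^ 2 = (t : ℤ) ^ 2) : s = t :=
    Nat.pow_left_injective two_ne_zero (by exact_mod_cast hst)
  have sq_add_four {s t : ℕ} (ht : 3 ≤ t) (hst : (s : ℤ) ^ 2 + 4 = (t : ℤ) ^ 2) : False :=
    Nat.sq_add_four_ne_sq ht (by exact_mod_cast hst)
  rcases starOffset_eq_sq_or_add_four_eq_sq hx with ⟨-, hx'⟩ | ⟨s, hs, rfl, hx'⟩ <;>
    rcases starOffset_eq_sq_or_add_four_eq_sq hy with ⟨-, hy'⟩ | ⟨t, ht, rfl, hy'⟩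
  · exact sq_inj (by linarith)
  · exact (sq_add_four (s := x) ht (by linarith)).elim
  · exact (sq_add_four (s := y) hs (by linarith)).elim
  · rw [sq_inj (s := s) (t := t) (by linarith)]

theorem exists_starOffset_eq_iff {m : ℕ} (hm0 : 0 < m) (hm : m ≤ 4 * k + 4) :
    (∃ x ≤ 2 * k + 2, starOffset (k + 2) k 2 x = m) ↔
      IsPerfectSquare m ∨ IsPerfectSquare (m + 4) := by
  constructor
  · rintro ⟨x, hx, hxm⟩
    rcases starOffset_eq_sq_or_add_four_eq_sq hx with ⟨-, hx'⟩ | ⟨s, -, -, hx'⟩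
    · exact Or.inl ⟨x, by zify; rw [← sq, ← hx', hxm]⟩
    · exact Or.inr ⟨s, by zify; rw [← sq, ← hx', hxm]⟩
  · rintro (⟨t, rfl⟩ | ⟨t, ht⟩)
    · have htk : t ≤ k + 2 := by nlinarith
      exact ⟨t, by omega, by rw [starOffset_eq_sq_of_le htk]; push_cast; ring⟩
    · have ht3 : 3 ≤ t := by nlinarith
      have htk : t ≤ k + 2 := by nlinarith
      refine ⟨k + t, by omega, ?_⟩
      have h := starOffset_add_add_four_eq_sq ht3 htk
      linarith

theorem starOffset_injective_iff :
    Function.Injective (fun x : Fin (k + 2 + k + 2 + 1) => starOffset (k + 2) k 2 x) ↔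
      (¬ ∃ x ≤ 2 * k + 2, starOffset (k + 2) k 2 x = ((2 * k + 1 : ℕ) : ℤ)) ∧
        ¬ ∃ x ≤ 2 * k + 2, starOffset (k + 2) k 2 x = ((4 * k + 4 : ℕ) : ℤ) := by
  have h3 := starOffset_two_mul_add_three (k := k)
  have h4 := starOffset_two_mul_add_four (k := k)
  push_cast
  constructor
  · intro hinj
    refine ⟨fun ⟨x, hx, hxe⟩ => ?_, fun ⟨x, hx, hxe⟩ => ?_⟩
    · have := congrArg Fin.val (@hinj ⟨x, by omega⟩ ⟨2 * k + 3, by omega⟩ (by simp [hxe, h3]))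
      simp only at this
      omega
    · have := congrArg Fin.val (@hinj ⟨x, by omega⟩ ⟨2 * k + 4, by omega⟩ (by simp [hxe, h4]))
      simp only at this
      omega
  · rintro ⟨h1, h2⟩ ⟨x, hx⟩ ⟨y, hy⟩ hxy
    simp only at hxy
    rw [Fin.mk.injEq]
    have hleaf {v : ℕ} (hv : v < k + 2 + k + 2 + 1) :
        v ≤ 2 * k + 2 ∨ v = 2 * k + 3 ∨ v = 2 * k + 4 := by omega
    rcases hleaf hx with hx | rfl | rfl <;> rcases hleaf hy with hy | rfl | rfl
    · exact eq_of_starOffset_eq hx hy hxy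
    · exact (h1 ⟨x, hx, hxy.trans h3⟩).elim
    · exact (h2 ⟨x, hx, hxy.trans h4⟩).elim
    · exact (h1 ⟨y, hy, hxy.symm.trans h3⟩).elim
    · rfl
    · linarith
    · exact (h2 ⟨y, hy, hxy.symm.trans h4⟩).elim
    · linarith
    · rfl

end StarlikeAddTwo

/-- for any odd `n ≥ 7`, the starlike tree `S((n-1)/2, (n-5)/2, 2)` is
transmission irregular iff none of `n - 4`, `n`, `2n - 6`, `2n - 2` is a perfect
square. -/
theorem starlike_TI_iff_odd (n : ℕ) (hodd : Odd n) (hn : 7 ≤ n) :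
    TransIrregular (starlike ((n - 1) / 2) ((n - 5) / 2) 2) ↔
      (¬ IsPerfectSquare (n - 4) ∧ ¬ IsPerfectSquare n ∧
        ¬ IsPerfectSquare (2 * n - 6) ∧ ¬ IsPerfectSquare (2 * n - 2)) := by
  obtain ⟨k, rfl⟩ : ∃ k, n = 2 * k + 5 := by
    obtain ⟨m, rfl⟩ := hodd
    exact ⟨m - 2, by omega⟩
  rw [show (2 * k + 5 - 1) / 2 = k + 2 by omega, show (2 * k + 5 - 5) / 2 = k by omega,
    transIrregular_starlike_iff (by omega), starOffset_injective_iff,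
    exists_starOffset_eq_iff (by omega) (by omega), exists_starOffset_eq_iff (by omega) le_rfl,
    show 2 * k + 5 - 4 = 2 * k + 1 by omega, show 2 * (2 * k + 5) - 6 = 4 * k + 4 by omega,
    show 2 * (2 * k + 5) - 2 = 4 * k + 4 + 4 by omega]
  tauto
end

section
/- For any odd integer n ≥ 17 such that n − 1 is a perfect square, the ordinary caterpillar C_{n−2}((n+1)/2, (n−3)/2 + √(n−1)) is transmission irregular. -/
open SimpleGraph

variable {V : Type*}

/-!
Put `r = √(n - 1) / 2` and `c = 2r² - 1`. The spine then has `2c + 1` vertices, the two leaves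
hang from the spine vertices at offsets `1` and `2r - 1` from its centre, and the transmission of
the spine vertex at offset `d` is `d² + |d - 1| + |d - (2r - 1)|` up to a common constant, while a
leaf exceeds its support vertex by `2c + 1 = 4r² - 1`. Transmission irregularity thus becomes a
Diophantine statement about `d ↦ d² + |d - 1| + |d - (2r - 1)|`, settled by factoring differences
of squares, by the absence of squares between consecutive squares, and by squares mod 4.
-/

open Finset

namespace SimpleGraph

variable {V : Type*} {G : SimpleGraph V}

lemma le_add_length_of_forall_adj_le_succ {f : V → ℕ} (hf : ∀ x y, G.Adj x y → f y ≤ f x + 1)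
    {u v : V} (p : G.Walk u v) : f v ≤ f u + p.length := by
  induction p with
  | nil => simp
  | cons h _ ih => have := hf _ _ h; simp only [Walk.length_cons]; omega

theorem dist_eq_of_forall_adj_le_succ_of_exists_pred {u : V} {f : V → ℕ} (hu : f u = 0)
    (hf : ∀ x y, G.Adj x y → f y ≤ f x + 1)
    (hpred : ∀ v, v ≠ u → ∃ w, G.Adj w v ∧ f w + 1 = f v) (v : V) : G.dist u v = f v := by
  have hwalk : ∀ k v, f v = k → ∃ p : G.Walk u v, p.length = k := by
    intro k
    induction k with
    | zero =>
      intro v hv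
      obtain rfl : v = u := by
        by_contra hvu
        obtain ⟨w, -, hw⟩ := hpred v hvu
        omega
      exact ⟨Walk.nil, rfl⟩
    | succ k ih =>
      intro v hv
      obtain ⟨w, hwv, hw⟩ := hpred v (by rintro rfl; omega)
      obtain ⟨p, hp⟩ := ih w (by omega)
      exact ⟨p.concat hwv, by simp [hp]⟩
  obtain ⟨p, hp⟩ := hwalk _ v rfl
  obtain ⟨q, hq⟩ := p.reachable.exists_walk_length_eq_dist
  refine le_antisymm (hp ▸ dist_le p) ?_
  simpa [hu, hq] using le_add_length_of_forall_adj_le_succ hf q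

end SimpleGraph

lemma transmission_add_two_of_dist_eq_succ {V : Type*} [Fintype V] {G : SimpleGraph V}
    {a l : V} (hal : a ≠ l) (h : ∀ k, k ≠ l → G.dist l k = G.dist a k + 1) :
    transmission G l + 2 = transmission G a + Fintype.card V := by
  classical
  have hl : transmission G l = ∑ k ∈ univ.erase l, (G.dist a k + 1) := by
    rw [transmission, ← add_sum_erase _ _ (mem_univ l), SimpleGraph.dist_self, zero_add]
    exact sum_congr rfl fun k hk => h k (ne_of_mem_erase hk)
  have ha : transmission G a = G.dist a l + ∑ k ∈ univ.erase l, G.dist a k := by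
    rw [transmission, ← add_sum_erase _ _ (mem_univ l)]
  have hal_dist : G.dist a l = 1 := by rw [SimpleGraph.dist_comm, h a hal, SimpleGraph.dist_self]
  have hcard : 0 < Fintype.card V := Fintype.card_pos_iff.mpr ⟨l⟩
  rw [hl, ha, hal_dist, sum_add_distrib, sum_const, card_erase_of_mem (mem_univ l), card_univ,
    smul_eq_mul, mul_one]
  omega

lemma two_mul_sum_range_abs_sub_self (x : ℕ) :
    2 * ∑ k ∈ range x, |(x : ℤ) - k| = x * (x + 1) := by
  induction x with
  | zero => simp
  | succ x ih =>
    rw [sum_range_succ']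
    simp only [Nat.cast_add, Nat.cast_one, add_sub_add_right_eq_sub, Nat.cast_zero, sub_zero]
    rw [mul_add, ih, abs_of_nonneg (by positivity)]
    ring

lemma two_mul_sum_range_abs_sub {x m : ℕ} (h : x ≤ m) :
    2 * ∑ k ∈ range m, |(x : ℤ) - k| = x * (x + 1) + (m - x) * (m - x - 1) := by
  induction m, h using Nat.le_induction with
  | base => rw [two_mul_sum_range_abs_sub_self]; ring
  | succ m hxm ih =>
    rw [sum_range_succ, mul_add, ih, abs_of_nonpos (by omega)]
    push_cast
    ring

/-- Vertices of `caterpillar2 m (p + 1) (q + 1)` are coded by their values: `x < m` is the spine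
vertex `x`, while the leaves `m` and `m + 1` hang from the spine vertices `p` and `q`. -/
def spineFoot (m p q x : ℕ) : ℕ := if x < m then x else if x = m then p else q

def caterpillarDist (m p q x y : ℕ) : ℕ :=
  if x = y then 0 else
    (spineFoot m p q x).dist (spineFoot m p q y) + (if m ≤ x then 1 else 0)
      + (if m ≤ y then 1 else 0)

section caterpillar2

variable {m p q : ℕ}

lemma caterpillarDist_le_succ_of_adj (hp : p < m) (hq : q < m) (u : ℕ) (x y : Fin (m + 2))
    (h : (caterpillar2 m (p + 1) (q + 1)).Adj x y) :
    caterpillarDist m p q u y ≤ caterpillarDist m p q u x + 1 := by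
  have hx := x.isLt
  have hy := y.isLt
  simp only [caterpillar2, fromRel_adj, ne_eq, Fin.ext_iff, Nat.add_sub_cancel] at h
  unfold caterpillarDist spineFoot Nat.dist
  split_ifs <;> omega

lemma exists_adj_caterpillarDist_add_one (hp : p < m) (hq : q < m) {u : ℕ} (hu : u < m + 2)
    (v : Fin (m + 2)) (hv : v.val ≠ u) :
    ∃ w : Fin (m + 2), (caterpillar2 m (p + 1) (q + 1)).Adj w v ∧
      caterpillarDist m p q u w + 1 = caterpillarDist m p q u v := by
  have hv' := v.isLt
  have hfoot : spineFoot m p q u < m := by unfold spineFoot; split_ifs <;> omega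
  simp only [caterpillar2, fromRel_adj, ne_eq, Fin.ext_iff, Nat.add_sub_cancel]
  unfold caterpillarDist Nat.dist
  by_cases hleaf : m ≤ v.val
  · refine ⟨⟨spineFoot m p q v, ?_⟩, ?_, ?_⟩ <;> simp only [spineFoot] <;> split_ifs <;> omega
  obtain hlt | heq | hgt := lt_trichotomy (spineFoot m p q u) v.val
  · refine ⟨⟨v.val - 1, by omega⟩, by dsimp only; omega, ?_⟩
    simp only [spineFoot] at hlt ⊢
    split_ifs at hlt ⊢ <;> omega
  · refine ⟨⟨u, hu⟩, ?_, ?_⟩ <;> simp only [spineFoot] at heq ⊢ <;> split_ifs at heq ⊢ <;> omega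
  · refine ⟨⟨v.val + 1, by omega⟩, by dsimp only; omega, ?_⟩
    simp only [spineFoot] at hgt ⊢
    split_ifs at hgt ⊢ <;> omega

theorem caterpillar2_dist (hp : p < m) (hq : q < m) (u v : Fin (m + 2)) :
    (caterpillar2 m (p + 1) (q + 1)).dist u v = caterpillarDist m p q u v :=
  SimpleGraph.dist_eq_of_forall_adj_le_succ_of_exists_pred
    (f := fun v : Fin (m + 2) => caterpillarDist m p q u v) (by simp [caterpillarDist]) (caterpillarDist_le_succ_of_adj hp hq u)
    (fun v hv => exists_adj_caterpillarDist_add_one hp hq u.isLt v (Fin.val_ne_of_ne hv)) v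

lemma transmission_caterpillar2 (hp : p < m) (hq : q < m) (v : Fin (m + 2)) :
    transmission (caterpillar2 m (p + 1) (q + 1)) v =
      ∑ k ∈ range (m + 2), caterpillarDist m p q v k := by
  rw [transmission, ← Fin.sum_univ_eq_sum_range]
  exact sum_congr rfl fun k _ => caterpillar2_dist hp hq v k

lemma transmission_caterpillar2_of_lt (hp : p < m) (hq : q < m) {x : ℕ} (hx : x < m) :
    (transmission (caterpillar2 m (p + 1) (q + 1)) ⟨x, by omega⟩ : ℤ) =
      ∑ k ∈ range m, |(x : ℤ) - k| + |(x : ℤ) - p| + |(x : ℤ) - q| + 2 := by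
  have hspine : ∀ k ∈ range m, (caterpillarDist m p q x k : ℤ) = |(x : ℤ) - k| := by
    intro k hk
    rw [mem_range] at hk
    rw [Int.abs_eq_natAbs]
    unfold caterpillarDist spineFoot Nat.dist
    split_ifs <;> omega
  have hleft : (caterpillarDist m p q x m : ℤ) = |(x : ℤ) - p| + 1 := by
    rw [Int.abs_eq_natAbs]
    unfold caterpillarDist spineFoot Nat.dist
    split_ifs <;> omega
  have hright : (caterpillarDist m p q x (m + 1) : ℤ) = |(x : ℤ) - q| + 1 := by
    rw [Int.abs_eq_natAbs]
    unfold caterpillarDist spineFoot Nat.dist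
    split_ifs <;> omega
  rw [transmission_caterpillar2 hp hq, sum_range_succ, sum_range_succ]
  push_cast
  rw [sum_congr rfl hspine, hleft, hright]
  ring

lemma transmission_caterpillar2_of_le (hp : p < m) (hq : q < m) {l a : Fin (m + 2)}
    (hl : m ≤ l.val) (hfoot : spineFoot m p q l = a) :
    transmission (caterpillar2 m (p + 1) (q + 1)) l =
      transmission (caterpillar2 m (p + 1) (q + 1)) a + m := by
  have hl' := l.isLt
  unfold spineFoot at hfoot
  have h := transmission_add_two_of_dist_eq_succ (G := caterpillar2 m (p + 1) (q + 1))
    (a := a) (l := l) (by rw [ne_eq, Fin.ext_iff]; split_ifs at hfoot <;> omega) fun k hk => by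
      have := k.isLt
      have := Fin.val_ne_of_ne hk
      rw [caterpillar2_dist hp hq, caterpillar2_dist hp hq]
      unfold caterpillarDist spineFoot Nat.dist
      split_ifs at hfoot ⊢ <;> omega
  rw [Fintype.card_fin] at h
  omega

end caterpillar2

/-- Up to a constant, the transmission of the spine vertex at offset `d` from the centre of an odd
spine whose two leaves hang from the spine vertices at offsets `α` and `β`. -/
def spineProfile (α β d : ℤ) : ℤ := d ^ 2 + |d - α| + |d - β|

section spineProfile
variable {α β d : ℤ}

lemma spineProfile_of_le_left (hd : d ≤ α) (hαβ : α ≤ β) :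
    spineProfile α β d = d ^ 2 - 2 * d + α + β := by
  rw [spineProfile, abs_of_nonpos (by linarith), abs_of_nonpos (by linarith)]; ring

lemma spineProfile_of_mem (hα : α ≤ d) (hβ : d ≤ β) :
    spineProfile α β d = d ^ 2 + β - α := by
  rw [spineProfile, abs_of_nonneg (by linarith), abs_of_nonpos (by linarith)]; ring

lemma spineProfile_of_le_right (hd : β ≤ d) (hαβ : α ≤ β) :
    spineProfile α β d = d ^ 2 + 2 * d - α - β := by
  rw [spineProfile, abs_of_nonneg (by linarith), abs_of_nonneg (by linarith)]; ring

end spineProfile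

theorem transIrregular_caterpillar2 {c p q : ℕ} {α β : ℤ} (hα : (p : ℤ) = c + α)
    (hβ : (q : ℤ) = c + β) (hp : p < 2 * c + 1) (hq : q < 2 * c + 1) (hpq : p ≠ q)
    (hinj : Function.Injective (spineProfile α β))
    (hleft : ∀ d, spineProfile α β d ≠ spineProfile α β α + (2 * c + 1))
    (hright : ∀ d, spineProfile α β d ≠ spineProfile α β β + (2 * c + 1)) :
    TransIrregular (caterpillar2 (2 * c + 1) (p + 1) (q + 1)) := by
  set G := caterpillar2 (2 * c + 1) (p + 1) (q + 1)
  have hspine : ∀ x (hx : x < 2 * c + 1),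
      (transmission G ⟨x, by omega⟩ : ℤ) = spineProfile α β (x - c) + (c * (c + 1) + 2) := by
    intro x hx
    have hsum := two_mul_sum_range_abs_sub hx.le
    push_cast at hsum
    rw [transmission_caterpillar2_of_lt hp hq hx, spineProfile, sub_sub, sub_sub, ← hα, ← hβ]
    linarith
  have hleaf_left : (transmission G ⟨2 * c + 1, by omega⟩ : ℤ) =
      spineProfile α β α + (2 * c + 1) + (c * (c + 1) + 2) := by
    rw [transmission_caterpillar2_of_le hp hq (a := ⟨p, by omega⟩) le_rfl (by simp [spineFoot]),
      Nat.cast_add, hspine p hp, hα]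
    push_cast
    ring_nf
  have hleaf_right : (transmission G ⟨2 * c + 1 + 1, by omega⟩ : ℤ) =
      spineProfile α β β + (2 * c + 1) + (c * (c + 1) + 2) := by
    rw [transmission_caterpillar2_of_le hp hq (a := ⟨q, by omega⟩) (by simp) (by simp [spineFoot]),
      Nat.cast_add, hspine q hq, hβ]
    push_cast
    ring_nf
  refine ⟨by simp, fun ⟨x, hx⟩ ⟨y, hy⟩ hxy => ?_⟩
  replace hxy := congrArg (Nat.cast : ℕ → ℤ) hxy
  rcases (show x < 2 * c + 1 ∨ x = 2 * c + 1 ∨ x = 2 * c + 1 + 1 by omega) with hx' | rfl | rfl <;>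
    rcases (show y < 2 * c + 1 ∨ y = 2 * c + 1 ∨ y = 2 * c + 1 + 1 by omega) with hy' | rfl | rfl
  · rw [hspine x hx', hspine y hy', add_left_inj] at hxy
    have := hinj hxy
    rw [Fin.mk.injEq]
    omega
  · rw [hspine x hx', hleaf_left, add_left_inj] at hxy
    exact (hleft _ hxy).elim
  · rw [hspine x hx', hleaf_right, add_left_inj] at hxy
    exact (hright _ hxy).elim
  · rw [hleaf_left, hspine y hy', add_left_inj] at hxy
    exact (hleft _ hxy.symm).elim
  · rfl
  · rw [hleaf_left, hleaf_right, add_left_inj, add_left_inj] at hxy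
    exact absurd (hinj hxy) (by omega)
  · rw [hleaf_right, hspine y hy', add_left_inj] at hxy
    exact (hright _ hxy.symm).elim
  · rw [hleaf_right, hleaf_left, add_left_inj, add_left_inj] at hxy
    exact absurd (hinj hxy) (by omega)
  · rfl

lemma Int.sq_emod_four_ne_three (y : ℤ) : y ^ 2 % 4 ≠ 3 := by
  rcases Int.even_or_odd y with ⟨k, rfl⟩ | hy
  · ring_nf; omega
  · rw [Int.sq_mod_four_eq_one_of_odd hy]; omega

section

variable {r : ℤ}

lemma spineProfile_injective (hr : 2 ≤ r) : Function.Injective (spineProfile 1 (2 * r - 1)) := by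
  intro d e h
  wlog hde : d ≤ e generalizing d e
  · exact (this h.symm (by omega)).symm
  have h1 : (1 : ℤ) ≤ 2 * r - 1 := by omega
  rcases le_total d 1 with hd | hd
  · rw [spineProfile_of_le_left hd h1] at h
    rcases le_total e 1 with he | he
    · rw [spineProfile_of_le_left he h1] at h
      nlinarith
    rcases le_total e (2 * r - 1) with he' | he'
    · rw [spineProfile_of_mem he he'] at h
      have : 1 - d < e := by nlinarith
      nlinarith
    · rw [spineProfile_of_le_right he' h1] at h
      -- the factor `e - d + 2` is at least `2 * r`, which leaves `e + d ∈ {1, 2}`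
      have hprod : (e + d) * (e - d + 2) = 4 * r := by linear_combination -h
      have hpos : 0 < e + d := by nlinarith
      have hle : e + d ≤ 2 := by nlinarith
      rcases (show e + d = 1 ∨ e + d = 2 by omega) with hs | hs <;> rw [hs] at hprod <;> omega
  rcases le_total d (2 * r - 1) with hd' | hd'
  · rw [spineProfile_of_mem hd hd'] at h
    rcases le_total e (2 * r - 1) with he' | he'
    · rw [spineProfile_of_mem (hd.trans hde) he'] at h
      nlinarith
    · rw [spineProfile_of_le_right he' h1] at h
      nlinarith
  · rw [spineProfile_of_le_right hd' h1, spineProfile_of_le_right (hd'.trans hde) h1] at h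
    nlinarith

lemma spineProfile_ne_spineProfile_one_add (hr : 2 ≤ r) (d : ℤ) :
    spineProfile 1 (2 * r - 1) d ≠ spineProfile 1 (2 * r - 1) 1 + (4 * r ^ 2 - 1) := by
  have h1 : (1 : ℤ) ≤ 2 * r - 1 := by omega
  rw [spineProfile_of_mem le_rfl h1]
  intro h
  rcases le_total d 1 with hd | hd
  · rw [spineProfile_of_le_left hd h1] at h
    rcases le_or_gt (1 - d) (2 * r - 1) with hy | hy <;> nlinarith
  rcases le_total d (2 * r - 1) with hd' | hd'
  · rw [spineProfile_of_mem hd hd'] at h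
    nlinarith
  · rw [spineProfile_of_le_right hd' h1] at h
    rcases le_or_gt (d + 1) (2 * r) with hz | hz <;> nlinarith

lemma spineProfile_ne_spineProfile_two_mul_sub_one_add (hr : 2 ≤ r) (d : ℤ) :
    spineProfile 1 (2 * r - 1) d ≠
      spineProfile 1 (2 * r - 1) (2 * r - 1) + (4 * r ^ 2 - 1) := by
  have h1 : (1 : ℤ) ≤ 2 * r - 1 := by omega
  rw [spineProfile_of_mem h1 le_rfl]
  intro h
  rcases le_total d 1 with hd | hd
  · rw [spineProfile_of_le_left hd h1] at h
    have := Int.sq_emod_four_ne_three (1 - d)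
    rw [show (1 - d) ^ 2 = 4 * (2 * r ^ 2 - r - 1) + 3 by linear_combination h] at this
    omega
  rcases le_total d (2 * r - 1) with hd' | hd'
  · rw [spineProfile_of_mem hd hd'] at h
    nlinarith
  · rw [spineProfile_of_le_right hd' h1] at h
    have := Int.sq_emod_four_ne_three (d + 1)
    rw [show (d + 1) ^ 2 = 4 * (2 * r ^ 2 - 1) + 3 by linear_combination h] at this
    omega

end

lemma exists_of_odd_of_sub_one_eq_mul_self {n t : ℕ} (hodd : Odd n) (hn : 17 ≤ n)
    (ht : n - 1 = t * t) : ∃ r c, 2 ≤ r ∧ t = r + r ∧ 2 * r * r = c + 1 ∧ n = 2 * c + 3 := by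
  obtain ⟨r, rfl⟩ : Even t := by
    have : Even (t * t) := ht ▸ Nat.Odd.sub_odd hodd odd_one
    exact (Nat.even_mul.mp this).elim id id
  have hr : 2 ≤ r := by
    have : 16 ≤ (r + r) * (r + r) := by omega
    nlinarith
  refine ⟨r, 2 * r * r - 1, hr, rfl, (Nat.sub_add_cancel (by nlinarith)).symm, ?_⟩
  have : (r + r) * (r + r) = 2 * (2 * r * r) := by ring
  have : 1 ≤ 2 * r * r := by nlinarith
  omega

/-- for any odd `n ≥ 17` with `n - 1` a perfect square, the ordinary
caterpillar `C_{n-2}((n+1)/2, (n-3)/2 + √(n-1))` is transmission irregular. -/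
theorem caterpillar_TI_of_odd_sq_sub_one (n : ℕ) (hodd : Odd n) (hn : 17 ≤ n)
    (hsq : IsPerfectSquare (n - 1)) :
    TransIrregular
      (caterpillar2 (n - 2) ((n + 1) / 2) ((n - 3) / 2 + Nat.sqrt (n - 1))) := by
  obtain ⟨t, ht⟩ := hsq
  obtain ⟨r, c, hr, rfl, hc, rfl⟩ := exists_of_odd_of_sub_one_eq_mul_self hodd hn ht
  have hcr : 2 * r ≤ c := by nlinarith
  rw [ht, Nat.sqrt_eq, show 2 * c + 3 - 2 = 2 * c + 1 by omega,
    show (2 * c + 3 + 1) / 2 = c + 1 + 1 by omega,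
    show (2 * c + 3 - 3) / 2 + (r + r) = c + 2 * r - 1 + 1 by omega]
  have hM : (2 * c + 1 : ℤ) = 4 * (r : ℤ) ^ 2 - 1 := by
    have := congrArg (Nat.cast : ℕ → ℤ) hc
    push_cast at this
    linear_combination -2 * this
  have hr' : (2 : ℤ) ≤ r := by exact_mod_cast hr
  refine transIrregular_caterpillar2 (α := 1) (β := 2 * r - 1) (by push_cast; ring) (by omega)
    (by omega) (by omega) (by omega) (spineProfile_injective hr') ?_ ?_
  · rw [hM]; exact spineProfile_ne_spineProfile_one_add hr'
  · rw [hM]; exact spineProfile_ne_spineProfile_two_mul_sub_one_add hr'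
end
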